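/- arXiv:0910.4263 — 6 statements merged into one kernel-verified Lean document; each statement's English description precedes it below -/
import Mathlib

section
/- The number of connected (irreducible) pairings c_{2n} of {1,...,2n} satisfies the Riordan recursion c_{2n} = (n-1) · Σ_{i=1}^{n-1} c_{2i} c_{2(n-i)} for n ≥ 2, with c_2 = 1. -/
/-- `P` is a partition of `Fin n`. -/
def IsPartitionOf {n : ℕ} (P : Finset (Finset (Fin n))) : Prop :=
  (∀ B ∈ P, B.Nonempty) ∧ ∀ i : Fin n, ∃! B, B ∈ P ∧ i ∈ B

/-- `P` is a pairing of `Fin n`: a partition all of whose blocks have two elements. -/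
def IsPairingOf {n : ℕ} (P : Finset (Finset (Fin n))) : Prop :=
  IsPartitionOf P ∧ ∀ B ∈ P, B.card = 2

/-- A subinterval of `Fin n`. -/
def IsIntervalSet {n : ℕ} (s : Finset (Fin n)) : Prop :=
  ∃ a b : Fin n, s = Finset.Icc a b

/-- A partition is connected if no proper (nonempty) subinterval is a union of blocks. -/
def IsConnectedPartition {n : ℕ} (P : Finset (Finset (Fin n))) : Prop :=
  ∀ s : Finset (Fin n), IsIntervalSet s → (∀ B ∈ P, B ⊆ s ∨ Disjoint B s) →
    s = ∅ ∨ s = Finset.univ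

/-- The number of connected pairings of `{1,…,2n}`. -/
noncomputable def connPairingCount (n : ℕ) : ℕ :=
  Nat.card {P : Finset (Finset (Fin (2 * n))) // IsPairingOf P ∧ IsConnectedPartition P}

/-!
Root decomposition. Let `g` be a connected pairing of `[2m]`, `m ≥ 2`, and `a` the partner of the
first point. Call `T` a cut if it is a union of blocks and `T ∪ {a}` is an interval with `a` in its
interior. A minimal cut carries a connected pairing, and there is only one such cut: if `T`
carries a connected pairing, any other cut `T'` meets `T` in a union of blocks that is an interval
relative to `T`, so `T ⊆ T'`. If the cut has `2k` points, then removing it leaves a connected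
pairing of `2(m - k)` points, the cut itself carries a connected pairing of `2k` points, and `a`
lies after the `(t + 1)`-st point of the cut for some `t < 2k - 1`. Conversely every such triple
glues back to a connected pairing, so `c_m = ∑ (2k - 1) c_k c_{m-k}`; averaging over `k ↔ m - k`
turns the weights `2k - 1` into `m - 1`.
-/

open Set Function

namespace ConnectedPairing

theorem mapsTo_compl_of_involutive {α : Type*} {g : α → α} {T : Set α} (hg : Involutive g)
    (hT : MapsTo g T T) : MapsTo g Tᶜ Tᶜ :=
  fun x hx hgx => hx (hg x ▸ hT hgx)

theorem _root_.Function.Involutive.mapsTo_pair {α : Type*} {g : α → α} (hg : Involutive g)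
    (a : α) : MapsTo g {a, g a} {a, g a} := by
  rintro _ (rfl | rfl)
  exacts [.inr rfl, .inl (hg _)]

theorem pair_ne_univ {α : Type*} {a b : α} (h : 2 < Nat.card α) : ({a, b} : Set α) ≠ univ := by
  intro hab
  have := ncard_insert_le a {b}
  rw [hab, ncard_univ, ncard_singleton] at this
  omega

section Semiconj

variable {α β γ : Type*} {g : α → α} {e : β → α} {σ : β → β}

theorem exists_semiconj_of_mapsTo (hg : MapsTo g (range e) (range e)) :
    ∃ σ : β → β, Semiconj e σ g := by
  choose σ hσ using fun q => hg (mem_range_self q)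
  exact ⟨σ, hσ⟩

theorem _root_.Function.Semiconj.involutive (h : Semiconj e σ g) (he : Injective e)
    (hg : Involutive g) : Involutive σ :=
  fun q => he (by rw [h, h, hg])

theorem _root_.Function.Semiconj.ne_self (h : Semiconj e σ g) (hg : ∀ x, g x ≠ x) (q : β) :
    σ q ≠ q :=
  fun hq => hg (e q) (by rw [← h, hq])

variable {e₁ : β → α} {e₂ : γ → α} {σ₁ : β → β} {σ₂ : γ → γ}

theorem forall_of_range_eq_compl (hc : range e₂ = (range e₁)ᶜ) {P : α → Prop}
    (h₁ : ∀ q, P (e₁ q)) (h₂ : ∀ p, P (e₂ p)) (x : α) : P x := by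
  by_cases hx : x ∈ range e₁
  · obtain ⟨q, rfl⟩ := hx
    exact h₁ q
  · obtain ⟨p, rfl⟩ := (hc ▸ hx : x ∈ range e₂)
    exact h₂ p

theorem exists_semiconj_semiconj (h₁ : Injective e₁) (h₂ : Injective e₂)
    (hc : range e₂ = (range e₁)ᶜ) (σ₁ : β → β) (σ₂ : γ → γ) :
    ∃ g : α → α, Semiconj e₁ σ₁ g ∧ Semiconj e₂ σ₂ g := by
  have hbij : Bijective (Sum.elim e₁ e₂) := by
    refine ⟨h₁.sumElim h₂ fun q p hqp => ?_, fun x => ?_⟩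
    · exact (hc ▸ mem_range_self p : e₂ p ∈ (range e₁)ᶜ) ⟨q, hqp⟩
    · exact forall_of_range_eq_compl hc (P := (· ∈ range (Sum.elim e₁ e₂)))
        (fun q => ⟨.inl q, rfl⟩) (fun p => ⟨.inr p, rfl⟩) x
  let E := Equiv.ofBijective _ hbij
  refine ⟨E ∘ Sum.map σ₁ σ₂ ∘ E.symm, fun q => ?_, fun p => ?_⟩
  · change _ = E (Sum.map σ₁ σ₂ (E.symm (E (.inl q))))
    rw [E.symm_apply_apply]
    rfl
  · change _ = E (Sum.map σ₁ σ₂ (E.symm (E (.inr p))))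
    rw [E.symm_apply_apply]
    rfl

end Semiconj

theorem even_natCard_of_involutive {β : Type*} [Finite β] {σ : β → β} (h : Involutive σ)
    (hne : ∀ x, σ x ≠ x) : Even (Nat.card β) := by
  classical
  have := Fintype.ofFinite β
  have hsupp : h.toPerm.support = Finset.univ :=
    Finset.eq_univ_of_forall fun x => Equiv.Perm.mem_support.2 (hne x)
  have := Equiv.Perm.two_dvd_card_support (σ := h.toPerm) (by ext x; simp [sq, h x])
  rwa [hsupp, Finset.card_univ, ← Nat.card_eq_fintype_card, ← even_iff_two_dvd] at this

theorem even_ncard_of_mapsTo {α : Type*} [Finite α] {g : α → α} {T : Set α} (hg : Involutive g)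
    (hne : ∀ x, g x ≠ x) (hT : MapsTo g T T) : Even T.ncard := by
  rw [← Nat.card_coe_set_eq]
  exact even_natCard_of_involutive (σ := hT.restrict g T T) (fun x => Subtype.ext (hg x))
    fun x hx => hne x (congrArg Subtype.val hx)

section LinearOrder

variable {α β : Type*} [LinearOrder α] [LinearOrder β] {g : α → α}

def OrdConnectedIn (S T : Set α) : Prop :=
  ∀ x ∈ S ∩ T, ∀ y ∈ S ∩ T, Icc x y ∩ T ⊆ S

theorem _root_.Set.OrdConnected.ordConnectedIn {S : Set α} (hS : S.OrdConnected) (T : Set α) :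
    OrdConnectedIn S T :=
  fun _ hx _ hy _ hz => hS.out hx.1 hy.1 hz.1

theorem ordConnectedIn_univ {S : Set α} : OrdConnectedIn S univ ↔ S.OrdConnected :=
  ⟨fun h => ⟨fun x hx y hy _ hz => h x ⟨hx, trivial⟩ y ⟨hy, trivial⟩ ⟨hz, trivial⟩⟩,
    fun h => h.ordConnectedIn univ⟩

/-- Connectedness of `g` restricted to `T`, phrased inside `α` so that restricting a pairing to a
union of blocks needs no subtype. -/
def IsConnectedOn (g : α → α) (T : Set α) : Prop :=
  ∀ S : Set α, MapsTo g S S → OrdConnectedIn S T → Disjoint S T ∨ T ⊆ S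

theorem isConnectedOn_univ_iff :
    IsConnectedOn g univ ↔ ∀ S : Set α, MapsTo g S S → S.OrdConnected → S = ∅ ∨ S = univ := by
  simp only [IsConnectedOn, ordConnectedIn_univ, disjoint_univ, univ_subset_iff]

/-- A connected pairing, encoded by the map sending each point to its partner. -/
structure IsConnectedInvolution (g : α → α) : Prop where
  involutive : Involutive g
  ne_self : ∀ x, g x ≠ x
  isConnectedOn_univ : IsConnectedOn g univ

theorem isConnectedOn_range_iff {e : β → α} (he : StrictMono e) {σ : β → β}
    (h : Semiconj e σ g) : IsConnectedOn g (range e) ↔ IsConnectedOn σ univ := by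
  constructor
  · intro hg S hS hconv
    have hmaps : MapsTo g (e '' S) (e '' S) := by
      rintro _ ⟨q, hq, rfl⟩
      exact ⟨σ q, hS hq, h q⟩
    have hconv' : OrdConnectedIn (e '' S) (range e) := by
      rintro _ ⟨⟨p, hp, rfl⟩, -⟩ _ ⟨⟨q, hq, rfl⟩, -⟩ _ ⟨⟨hpr, hrq⟩, r, rfl⟩
      exact ⟨r, hconv p ⟨hp, trivial⟩ q ⟨hq, trivial⟩
        ⟨⟨he.le_iff_le.1 hpr, he.le_iff_le.1 hrq⟩, trivial⟩, rfl⟩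
    refine (hg _ hmaps hconv').imp (fun hd => ?_) (fun hsub => ?_)
    · exact disjoint_univ.2 (eq_empty_of_forall_notMem fun q hq =>
        disjoint_left.1 hd (mem_image_of_mem e hq) (mem_range_self q))
    · intro q _
      obtain ⟨p, hp, hpq⟩ := hsub (mem_range_self q)
      exact he.injective hpq ▸ hp
  · intro hσ S hS hconv
    have hmaps : MapsTo σ (e ⁻¹' S) (e ⁻¹' S) := fun q hq => by
      simpa only [mem_preimage, h q] using hS hq
    have hconv' : OrdConnectedIn (e ⁻¹' S) univ := by
      rintro p ⟨hp, -⟩ q ⟨hq, -⟩ r ⟨⟨hpr, hrq⟩, -⟩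
      exact hconv _ ⟨hp, p, rfl⟩ _ ⟨hq, q, rfl⟩ ⟨⟨he.monotone hpr, he.monotone hrq⟩, r, rfl⟩
    refine (hσ _ hmaps hconv').imp (fun hd => ?_) (fun hsub => ?_)
    · rw [disjoint_left]
      rintro _ hx ⟨q, rfl⟩
      exact disjoint_left.1 hd hx (mem_univ q)
    · rintro _ ⟨q, rfl⟩
      exact hsub (mem_univ q)

theorem IsConnectedInvolution.of_isConnectedOn_range {e : β → α} (he : StrictMono e) {σ : β → β}
    (h : Semiconj e σ g) (hg : Involutive g) (hg' : ∀ x, g x ≠ x)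
    (hT : IsConnectedOn g (range e)) : IsConnectedInvolution σ :=
  ⟨h.involutive he.injective hg, h.ne_self hg', (isConnectedOn_range_iff he h).1 hT⟩

theorem _root_.Set.OrdConnected.exists_eq_Icc [Finite α] {S : Set α} (hS : S.OrdConnected)
    (hne : S.Nonempty) : ∃ l r, S = Icc l r := by
  obtain ⟨l, hl, hlmin⟩ := S.exists_min_image id (toFinite S) hne
  obtain ⟨r, hr, hrmax⟩ := S.exists_max_image id (toFinite S) hne
  exact ⟨l, r, (hS.out hl hr).antisymm' fun x hx => ⟨hlmin x hx, hrmax x hx⟩⟩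

structure IsCut (g : α → α) (a : α) (T : Set α) : Prop where
  mapsTo : MapsTo g T T
  not_mem : a ∉ T
  ordConnected : (insert a T).OrdConnected
  exists_lt : ∃ x ∈ T, x < a
  exists_gt : ∃ y ∈ T, a < y

namespace IsConnectedInvolution

variable {o : α}

theorem exists_lt_lt (h : IsConnectedInvolution g) (ho : IsBot o) (hcard : 2 < Nat.card α) :
    ∃ x, o < x ∧ x < g o := by
  by_contra! hno
  have hIic : Iic (g o) = {o, g o} := by
    ext x
    refine ⟨fun hx => (ho x).lt_or_eq.elim (fun hox => .inr (hx.antisymm (hno x hox)))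
      (.inl ·.symm), ?_⟩
    rintro (rfl | rfl)
    exacts [ho _, le_rfl]
  rcases isConnectedOn_univ_iff.1 h.isConnectedOn_univ _ (hIic ▸ h.involutive.mapsTo_pair o)
    ordConnected_Iic with he | hu
  · exact (he ▸ (le_refl (g o) : g o ∈ Iic (g o)) : g o ∈ (∅ : Set α))
  · exact pair_ne_univ hcard (hIic ▸ hu)

theorem exists_gt (h : IsConnectedInvolution g) (ho : IsBot o) (hcard : 2 < Nat.card α) :
    ∃ y, g o < y := by
  by_contra! hno
  have hord : ({o, g o}ᶜ : Set α).OrdConnected := by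
    refine ⟨fun x hx y hy z hz => ?_⟩
    rintro (rfl | rfl)
    · exact hx (.inl (hz.1.antisymm (ho x)))
    · exact hy (.inr ((hno y).antisymm hz.2))
  rcases isConnectedOn_univ_iff.1 h.isConnectedOn_univ _
    (mapsTo_compl_of_involutive h.involutive (h.involutive.mapsTo_pair o)) hord with he | hu
  · exact pair_ne_univ hcard (compl_empty_iff.1 he)
  · exact (hu ▸ mem_univ o : o ∈ ({o, g o}ᶜ : Set α)) (.inl rfl)

theorem isCut_compl_pair (h : IsConnectedInvolution g) (ho : IsBot o)
    (hcard : 2 < Nat.card α) : IsCut g (g o) {o, g o}ᶜ := by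
  obtain ⟨x, hox, hxa⟩ := h.exists_lt_lt ho hcard
  obtain ⟨y, hay⟩ := h.exists_gt ho hcard
  have hinsert : insert (g o) ({o, g o}ᶜ : Set α) = Ioi o := by
    ext z
    simp only [mem_insert_iff, mem_compl_iff, mem_Ioi, mem_singleton_iff, not_or]
    refine ⟨fun hz => ?_, fun hz => ?_⟩
    · rcases hz with rfl | ⟨hzo, -⟩
      exacts [hox.trans hxa, (ho z).lt_of_ne' hzo]
    · by_cases hza : z = g o
      exacts [.inl hza, .inr ⟨hz.ne', hza⟩]
  refine ⟨mapsTo_compl_of_involutive h.involutive (h.involutive.mapsTo_pair o),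
    fun h => h (.inr rfl), hinsert ▸ ordConnected_Ioi, ⟨x, ?_, hxa⟩, ⟨y, ?_, hay⟩⟩
  · rintro (rfl | rfl)
    exacts [hox.false, hxa.false]
  · rintro (rfl | rfl)
    exacts [(ho _).not_gt hay, hay.false]

end IsConnectedInvolution

namespace IsCut

variable {a o : α} {T T' : Set α}

theorem mem_of_mem_Icc (hT : IsCut g a T) {x y z : α} (hx : x ∈ insert a T)
    (hy : y ∈ insert a T) (hz : z ∈ Icc x y) (hza : z ≠ a) : z ∈ T :=
  (hT.ordConnected.out hx hy hz).resolve_left hza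

theorem le_of_mem_of_le (hT : IsCut g a T) {x z : α} (hx : x ∈ T) (hz : z ∉ T) (hxz : x ≤ z) :
    a ≤ z :=
  le_of_not_gt fun hza =>
    hz (hT.mem_of_mem_Icc (.inr hx) (mem_insert a T) ⟨hxz, hza.le⟩ hza.ne)

theorem le_of_le_of_mem (hT : IsCut g a T) {y z : α} (hy : y ∈ T) (hz : z ∉ T) (hzy : z ≤ y) :
    z ≤ a :=
  le_of_not_gt fun haz =>
    hz (hT.mem_of_mem_Icc (mem_insert a T) (.inr hy) ⟨haz.le, hzy⟩ haz.ne')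

theorem nonempty (hT : IsCut g a T) : T.Nonempty :=
  let ⟨x, hx, _⟩ := hT.exists_lt
  ⟨x, hx⟩

theorem isConnectedOn_univ (hT : IsCut g (g o) T) (ho : IsBot o) (h : IsConnectedOn g T)
    (hc : IsConnectedOn g Tᶜ) : IsConnectedOn g univ := by
  rw [isConnectedOn_univ_iff]
  intro S hS hconv
  obtain ⟨x, hxT, hxa⟩ := hT.exists_lt
  obtain ⟨y, hyT, hay⟩ := hT.exists_gt
  have hoT : o ∉ T := fun h => hT.not_mem (hT.mapsTo h)
  rcases h S hS (hconv.ordConnectedIn T) with hST | hTS <;>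
    rcases hc S hS (hconv.ordConnectedIn Tᶜ) with hSTc | hTcS
  · exact Or.inl (hST.eq_bot_of_le (disjoint_compl_right_iff_subset.1 hSTc))
  · have hxS : x ∈ S := hconv.out (hTcS hoT) (hTcS hT.not_mem) ⟨ho x, hxa.le⟩
    exact absurd hxT (disjoint_left.1 hST hxS)
  · have haS : g o ∈ S := hconv.out (hTS hxT) (hTS hyT) ⟨hxa.le, hay.le⟩
    exact absurd hT.not_mem (disjoint_left.1 hSTc haS)
  · exact Or.inr (eq_univ_of_forall fun z => (em (z ∈ T)).elim (hTS ·) (hTcS ·))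

theorem ordConnected_union {S : Set α} (hT : IsCut g a T) (hconv : OrdConnectedIn S Tᶜ)
    (haS : a ∈ S) : (S ∪ T).OrdConnected := by
  refine ⟨fun x hx y hy z hz => (em (z ∈ T)).elim .inr fun hzT => .inl ?_⟩
  obtain ⟨x', hx', hx'z⟩ : ∃ x' ∈ S ∩ Tᶜ, x' ≤ z := by
    by_cases hxT : x ∈ T
    · exact ⟨a, ⟨haS, hT.not_mem⟩, hT.le_of_mem_of_le hxT hzT hz.1⟩
    · exact ⟨x, ⟨hx.resolve_right hxT, hxT⟩, hz.1⟩
  obtain ⟨y', hy', hzy'⟩ : ∃ y' ∈ S ∩ Tᶜ, z ≤ y' := by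
    by_cases hyT : y ∈ T
    · exact ⟨a, ⟨haS, hT.not_mem⟩, hT.le_of_le_of_mem hyT hzT hz.2⟩
    · exact ⟨y, ⟨hy.resolve_right hyT, hyT⟩, hz.2⟩
  exact hconv x' hx' y' hy' ⟨⟨hx'z, hzy'⟩, hzT⟩

theorem ordConnected_inter_compl {S : Set α} (hT : IsCut g a T) (hconv : OrdConnectedIn S Tᶜ)
    (haS : a ∉ S) : (S ∩ Tᶜ).OrdConnected := by
  refine ⟨fun x hx y hy z hz => (em (z ∈ T)).elim (fun hzT => ?_) fun hzT =>
    ⟨hconv x hx y hy ⟨hz, hzT⟩, hzT⟩⟩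
  have haxy : a ∈ Icc x y :=
    ⟨hT.le_of_le_of_mem hzT hx.2 hz.1, hT.le_of_mem_of_le hzT hy.2 hz.2⟩
  exact absurd (hconv x hx y hy ⟨haxy, hT.not_mem⟩) haS

theorem isConnectedOn_compl (hT : IsCut g a T) (hg : Involutive g) (h : IsConnectedOn g univ) :
    IsConnectedOn g Tᶜ := by
  rw [isConnectedOn_univ_iff] at h
  intro S hS hconv
  obtain ⟨x, hx⟩ := hT.nonempty
  by_cases haS : a ∈ S
  · rcases h _ (hS.union_union hT.mapsTo) (hT.ordConnected_union hconv haS) with hempty | huniv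
    · exact absurd (hempty ▸ mem_union_right S hx) (notMem_empty x)
    · exact .inr fun z hz => ((huniv ▸ mem_univ z : z ∈ S ∪ T)).resolve_right hz
  · rcases h _ (hS.inter_inter (mapsTo_compl_of_involutive hg hT.mapsTo))
      (hT.ordConnected_inter_compl hconv haS) with hempty | huniv
    · exact .inl (disjoint_iff_inter_eq_empty.2 hempty)
    · exact absurd hx (huniv ▸ mem_univ x : x ∈ S ∩ Tᶜ).2

theorem subset_of_isConnectedOn (hT : IsCut g a T) (hT' : IsCut g a T')
    (h : IsConnectedOn g T) : T ⊆ T' := by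
  have hconv : OrdConnectedIn T' T := fun x hx y hy z hz =>
    hT'.mem_of_mem_Icc (.inr hx.1) (.inr hy.1) hz.1 fun hza => hT.not_mem (hza ▸ hz.2)
  obtain ⟨x, hxT, hxa⟩ := hT.exists_lt
  obtain ⟨x', hxT', hxa'⟩ := hT'.exists_lt
  have hmax : max x x' ∈ T ∩ T' :=
    ⟨hT.mem_of_mem_Icc (.inr hxT) (mem_insert a T) ⟨le_max_left x x', (max_lt hxa hxa').le⟩
        (max_lt hxa hxa').ne,
      hT'.mem_of_mem_Icc (.inr hxT') (mem_insert a T') ⟨le_max_right x x', (max_lt hxa hxa').le⟩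
        (max_lt hxa hxa').ne⟩
  exact (h T' hT'.mapsTo hconv).resolve_left
    (not_disjoint_iff.2 ⟨max x x', hmax.2, hmax.1⟩)

theorem eq_of_isConnectedOn (hT : IsCut g a T) (hT' : IsCut g a T')
    (h : IsConnectedOn g T) (h' : IsConnectedOn g T') : T = T' :=
  (hT.subset_of_isConnectedOn hT' h).antisymm (hT'.subset_of_isConnectedOn hT h')

theorem inter {S : Set α} (hT : IsCut g a T) (hS : MapsTo g S S) (hconv : OrdConnectedIn S T)
    {x y : α} (hx : x ∈ S ∩ T) (hxa : x < a) (hy : y ∈ S ∩ T) (hay : a < y) :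
    IsCut g a (S ∩ T) := by
  refine ⟨hS.inter_inter hT.mapsTo, fun h => hT.not_mem h.2, ⟨fun u hu v hv z hz => ?_⟩,
    ⟨x, hx, hxa⟩, ⟨y, hy, hay⟩⟩
  refine (eq_or_ne z a).elim .inl fun hza => .inr ?_
  have hsub := insert_subset_insert (s := S ∩ T) (a := a) inter_subset_right
  have hzT := hT.mem_of_mem_Icc (hsub hu) (hsub hv) hz hza
  obtain ⟨u', hu', hu'z⟩ : ∃ u' ∈ S ∩ T, u' ≤ z := by
    rcases hu with rfl | hu
    · exact ⟨x, hx, hxa.le.trans hz.1⟩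
    · exact ⟨u, hu, hz.1⟩
  obtain ⟨v', hv', hzv'⟩ : ∃ v' ∈ S ∩ T, z ≤ v' := by
    rcases hv with rfl | hv
    · exact ⟨y, hy, hz.2.trans hay.le⟩
    · exact ⟨v, hv, hz.2⟩
  exact ⟨hconv u' hu' v' hv' ⟨⟨hu'z, hzv'⟩, hzT⟩, hzT⟩

theorem ordConnected_inter {S : Set α} (hT : IsCut g a T) (hconv : OrdConnectedIn S T)
    (h : ∀ x ∈ S ∩ T, ∀ y ∈ S ∩ T, a ∉ Icc x y) : (S ∩ T).OrdConnected := by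
  refine ⟨fun u hu v hv z hz => ?_⟩
  have hza : z ≠ a := fun hza => h u hu v hv (hza ▸ hz)
  have hzT := hT.mem_of_mem_Icc (.inr hu.2) (.inr hv.2) hz hza
  exact ⟨hconv u hu v hv ⟨hz, hzT⟩, hzT⟩

/-- A minimal cut is one on which `g` is connected. -/
theorem exists_isConnectedOn [Finite α] (hT : IsCut g a T) (h : IsConnectedOn g univ) :
    ∃ T', IsCut g a T' ∧ IsConnectedOn g T' := by
  obtain ⟨T, hmin⟩ := (toFinite {T | IsCut g a T}).exists_minimal ⟨T, hT⟩
  have hT : IsCut g a T := hmin.prop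
  refine ⟨T, hT, fun S hS hconv => ?_⟩
  by_cases hsplit : ∃ x ∈ S ∩ T, ∃ y ∈ S ∩ T, a ∈ Icc x y
  · obtain ⟨x, hx, y, hy, hxa, hay⟩ := hsplit
    have hcut := hT.inter hS hconv hx (hxa.lt_of_ne fun h => hT.not_mem (h ▸ hx.2)) hy
      (hay.lt_of_ne' fun h => hT.not_mem (h ▸ hy.2))
    exact .inr ((hmin.eq_of_subset hcut inter_subset_right).symm ▸ inter_subset_left)
  · rcases isConnectedOn_univ_iff.1 h _ (hS.inter_inter hT.mapsTo)
      (hT.ordConnected_inter hconv fun x hx y hy haxy => hsplit ⟨x, hx, y, hy, haxy⟩)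
      with hempty | huniv
    · exact .inl (disjoint_iff_inter_eq_empty.2 hempty)
    · exact absurd (huniv ▸ mem_univ a : a ∈ S ∩ T).2 hT.not_mem

theorem exists_eq_Icc_diff [Finite α] (hT : IsCut g a T) : ∃ l r, T = Icc l r \ {a} := by
  obtain ⟨l, r, hlr⟩ := hT.ordConnected.exists_eq_Icc (insert_nonempty a T)
  exact ⟨l, r, by rw [← hlr, insert_sdiff_self_of_notMem hT.not_mem]⟩

end IsCut

end LinearOrder

section Insertion

variable {m k : ℕ} (A : Fin (2 * (m - k))) (t : Fin (2 * k - 1))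

/-- The `2k` inner points fill `[A, A + 2k]` except `A + t + 1`, where the outer point `A` goes. -/
def innerEmb (q : Fin (2 * k)) : Fin (2 * m) :=
  ⟨if q.val ≤ t then A + q else A + q + 1, by
    have := A.isLt; have := q.isLt; split_ifs <;> omega⟩

def outerEmb (p : Fin (2 * (m - k))) : Fin (2 * m) :=
  ⟨if p.val < A then p else if p.val = A then A + t + 1 else p + 2 * k, by
    have := A.isLt; have := t.isLt; have := p.isLt; split_ifs <;> omega⟩

theorem innerEmb_strictMono : StrictMono (innerEmb A t) := by
  intro q q' h
  rw [Fin.lt_def] at h ⊢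
  simp only [innerEmb]
  split_ifs <;> omega

theorem outerEmb_strictMono : StrictMono (outerEmb A t) := by
  intro p p' h
  rw [Fin.lt_def] at h ⊢
  simp only [outerEmb]
  split_ifs <;> omega

theorem mem_range_innerEmb {x : Fin (2 * m)} :
    x ∈ range (innerEmb A t) ↔ A ≤ x.val ∧ x.val ≤ A + 2 * k ∧ x.val ≠ A + t + 1 := by
  constructor
  · rintro ⟨q, rfl⟩
    have := q.isLt; have := t.isLt
    simp only [innerEmb]
    split_ifs <;> omega
  · intro hx
    refine ⟨⟨if x.val ≤ A + t then x - A else x - A - 1, by split_ifs <;> omega⟩, Fin.ext ?_⟩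
    simp only [innerEmb]
    split_ifs <;> omega

theorem mem_range_outerEmb {x : Fin (2 * m)} :
    x ∈ range (outerEmb A t) ↔ x.val < A ∨ x.val = A + t + 1 ∨ A + 2 * k < x.val := by
  have := A.isLt; have := x.isLt
  constructor
  · rintro ⟨p, rfl⟩
    have := p.isLt
    simp only [outerEmb]
    split_ifs <;> omega
  · intro hx
    refine ⟨⟨if x.val < A then x else if x.val = A + t + 1 then A else x - 2 * k,
      by split_ifs <;> omega⟩, Fin.ext ?_⟩
    simp only [outerEmb]
    split_ifs <;> omega

theorem range_outerEmb : range (outerEmb A t) = (range (innerEmb A t))ᶜ := by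
  ext x
  simp only [mem_compl_iff, mem_range_innerEmb, mem_range_outerEmb]
  omega

theorem outerEmb_self_val : (outerEmb A t A).val = A + t + 1 := by
  simp [outerEmb]

theorem isCut_range_innerEmb {g : Fin (2 * m) → Fin (2 * m)} {σ : Fin (2 * k) → Fin (2 * k)}
    (h : Semiconj (innerEmb A t) σ g) : IsCut g (outerEmb A t A) (range (innerEmb A t)) := by
  have hk := t.isLt
  refine ⟨?_, ?_, ⟨fun x hx y hy z hz => ?_⟩, ?_, ?_⟩
  · rintro _ ⟨q, rfl⟩
    exact ⟨σ q, h q⟩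
  · rw [← mem_compl_iff, ← range_outerEmb]
    exact mem_range_self A
  · simp only [mem_insert_iff, Fin.ext_iff, outerEmb_self_val, mem_range_innerEmb,
      mem_Icc, Fin.le_def] at hx hy hz ⊢
    omega
  · refine ⟨innerEmb A t ⟨0, by omega⟩, mem_range_self _, ?_⟩
    simp [Fin.lt_def, innerEmb, outerEmb_self_val]
  · refine ⟨innerEmb A t ⟨2 * k - 1, by omega⟩, mem_range_self _, ?_⟩
    simp only [Fin.lt_def, innerEmb, outerEmb_self_val]
    split_ifs <;> omega

theorem val_outerEmb_of_lt {p : Fin (2 * (m - k))} (hp : p.val < A) : (outerEmb A t p).val = p :=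
  if_pos hp

theorem eq_of_range_innerEmb_eq {k' : ℕ} {A' : Fin (2 * (m - k'))} {t' : Fin (2 * k' - 1)}
    (h : range (innerEmb A t) = range (innerEmb A' t')) :
    k = k' ∧ A.val = A'.val ∧ t.val = t'.val := by
  have hA := A.isLt; have hA' := A'.isLt; have ht := t.isLt; have ht' := t'.isLt
  have hmem (x : ℕ) (hx : x < 2 * m) := Set.ext_iff.1 h ⟨x, hx⟩
  simp only [mem_range_innerEmb] at hmem
  have e1 := ((hmem A (by omega)).1 ⟨le_rfl, by omega, by omega⟩).1
  have e2 := ((hmem A' (by omega)).2 ⟨le_rfl, by omega, by omega⟩).1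
  have e3 := ((hmem (A + 2 * k) (by omega)).1 ⟨by omega, le_rfl, by omega⟩).2.1
  have e4 := ((hmem (A' + 2 * k') (by omega)).2 ⟨by omega, le_rfl, by omega⟩).2.1
  refine ⟨by omega, by omega, by_contra fun hne => ?_⟩
  exact ((hmem (A + t + 1) (by omega)).2 ⟨by omega, by omega, by omega⟩).2.2 rfl

variable {A t}

theorem val_outerEmb_eq_zero {σ₂ : Fin (2 * (m - k)) → Fin (2 * (m - k))}
    (h₂ : ∀ p, σ₂ p ≠ p) {o : Fin (2 * (m - k))} (ho : o.val = 0) (hA : σ₂ o = A) :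
    (outerEmb A t o).val = 0 := by
  have hAo : o.val < A := by
    have := h₂ o
    rw [hA] at this
    exact ho ▸ Nat.pos_of_ne_zero fun h => this (Fin.ext (h.trans ho.symm))
  rw [val_outerEmb_of_lt A t hAo, ho]

theorem isCut_of_semiconj {σ₁ : Fin (2 * k) → Fin (2 * k)}
    {σ₂ : Fin (2 * (m - k)) → Fin (2 * (m - k))} {g : Fin (2 * m) → Fin (2 * m)}
    {o : Fin (2 * (m - k))} (hA : σ₂ o = A) (hg₁ : Semiconj (innerEmb A t) σ₁ g)
    (hg₂ : Semiconj (outerEmb A t) σ₂ g) :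
    IsCut g (g (outerEmb A t o)) (range (innerEmb A t)) := by
  rw [← hg₂, hA]
  exact isCut_range_innerEmb A t hg₁

theorem isConnectedInvolution_of_semiconj_inner_outer {σ₁ : Fin (2 * k) → Fin (2 * k)}
    {σ₂ : Fin (2 * (m - k)) → Fin (2 * (m - k))} {g : Fin (2 * m) → Fin (2 * m)}
    (h₁ : IsConnectedInvolution σ₁) (h₂ : IsConnectedInvolution σ₂) {o : Fin (2 * (m - k))}
    (ho : o.val = 0) (hA : σ₂ o = A) (hg₁ : Semiconj (innerEmb A t) σ₁ g)
    (hg₂ : Semiconj (outerEmb A t) σ₂ g) : IsConnectedInvolution g := by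
  have hc := range_outerEmb A t
  have he₁ := (innerEmb_strictMono A t).injective
  have he₂ := (outerEmb_strictMono A t).injective
  have hinv : Involutive g := forall_of_range_eq_compl hc
    (fun q => by rw [← hg₁, ← hg₁, h₁.involutive]) (fun p => by rw [← hg₂, ← hg₂, h₂.involutive])
  have hne : ∀ x, g x ≠ x := forall_of_range_eq_compl hc
    (fun q hq => h₁.ne_self q (he₁ (by rwa [hg₁])))
    (fun p hp => h₂.ne_self p (he₂ (by rwa [hg₂])))
  have hbot : IsBot (outerEmb A t o) := fun x => by
    rw [Fin.le_def, val_outerEmb_eq_zero h₂.ne_self ho hA]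
    exact Nat.zero_le _
  exact ⟨hinv, hne, (isCut_of_semiconj hA hg₁ hg₂).isConnectedOn_univ hbot
    ((isConnectedOn_range_iff (innerEmb_strictMono A t) hg₁).2 h₁.isConnectedOn_univ)
    (hc ▸ (isConnectedOn_range_iff (outerEmb_strictMono A t) hg₂).2 h₂.isConnectedOn_univ)⟩

theorem IsCut.exists_eq_range_innerEmb {g : Fin (2 * m) → Fin (2 * m)} {a : Fin (2 * m)}
    {T : Set (Fin (2 * m))} (hT : IsCut g a T) (hg : Involutive g) (hne : ∀ x, g x ≠ x)
    (h0 : ∀ x ∈ T, x.val ≠ 0) :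
    ∃ k ∈ Finset.Ico 1 m, ∃ (A : Fin (2 * (m - k))) (t : Fin (2 * k - 1)),
      0 < A.val ∧ outerEmb A t A = a ∧ range (innerEmb A t) = T := by
  obtain ⟨l, r, rfl⟩ := hT.exists_eq_Icc_diff
  obtain ⟨x, hx, hxa⟩ := hT.exists_lt
  obtain ⟨y, hy, hay⟩ := hT.exists_gt
  have hl : l ∈ Icc l r \ {a} :=
    (mem_sdiff l).2 ⟨⟨le_rfl, hx.1.1.trans hx.1.2⟩, (hx.1.1.trans_lt hxa).ne⟩
  have hcard : (Icc l r \ {a}).ncard + 1 = r + 1 - l := by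
    rw [ncard_sdiff_singleton_add_one (s := Icc l r)
      ⟨hx.1.1.trans hxa.le, hay.le.trans hy.1.2⟩ (toFinite _),
      ← Finset.coe_Icc, ncard_coe_finset, Fin.card_Icc]
  obtain ⟨k, hk⟩ := even_ncard_of_mapsTo hg hne hT.mapsTo
  have hl0 := h0 l hl
  have := r.isLt
  simp only [mem_sdiff, mem_Icc, mem_singleton_iff, Fin.lt_def, Fin.le_def, Fin.ext_iff]
    at hx hxa hy hay
  refine ⟨k, Finset.mem_Ico.2 ⟨by omega, by omega⟩, ⟨l, by omega⟩, ⟨a - l - 1, by omega⟩,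
    by dsimp only; omega, Fin.ext ?_, ext fun z => ?_⟩
  · rw [outerEmb_self_val]
    dsimp only
    omega
  · simp only [mem_range_innerEmb, mem_sdiff, mem_Icc, mem_singleton_iff, Fin.le_def, Fin.ext_iff]
    omega

end Insertion

abbrev ConnectedInvolutions (n : ℕ) : Type :=
  {σ : Fin n → Fin n // IsConnectedInvolution σ}

theorem natCard_connectedInvolutions_two : Nat.card (ConnectedInvolutions 2) = 1 := by
  rw [Nat.card_eq_one_iff_exists]
  refine ⟨⟨Fin.rev, Fin.rev_rev, by decide, ?_⟩, fun σ => Subtype.ext (funext fun i => ?_)⟩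
  · rw [isConnectedOn_univ_iff]
    intro S hS _
    refine S.eq_empty_or_nonempty.imp id fun ⟨i, hi⟩ => eq_univ_of_forall fun j => ?_
    obtain rfl | rfl : j = i ∨ j = i.rev := by fin_cases i <;> fin_cases j <;> decide
    exacts [hi, hS hi]
  · have := σ.2.ne_self i
    revert this
    generalize σ.1 i = j
    fin_cases i <;> fin_cases j <;> decide

def InsertionData (m : ℕ) : Type :=
  Σ k : Finset.Ico 1 m,
    ConnectedInvolutions (2 * k) × ConnectedInvolutions (2 * (m - k)) × Fin (2 * k - 1)

namespace InsertionData

variable {m : ℕ}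

def root (x : InsertionData m) : Fin (2 * (m - x.1)) :=
  x.2.2.1.1 ⟨0, by have := Finset.mem_Ico.1 x.1.2; omega⟩

theorem exists_semiconj_of_isConnectedInvolution (hm : 2 ≤ m) {g : Fin (2 * m) → Fin (2 * m)}
    (h : IsConnectedInvolution g) : ∃ x : InsertionData m,
      Semiconj (innerEmb x.root x.2.2.2) x.2.1.1 g ∧
        Semiconj (outerEmb x.root x.2.2.2) x.2.2.1.1 g := by
  let o : Fin (2 * m) := ⟨0, by omega⟩
  have hbot : IsBot o := fun x => Nat.zero_le x.val
  obtain ⟨T, hT, hTc⟩ := (h.isCut_compl_pair hbot (by simp; omega)).exists_isConnectedOn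
    h.isConnectedOn_univ
  obtain ⟨k, hk, A, t, hA0, hAa, rfl⟩ := hT.exists_eq_range_innerEmb h.involutive h.ne_self
    fun x hx hx0 => hT.not_mem (hT.mapsTo ((Fin.ext hx0 : x = o) ▸ hx))
  obtain ⟨σ₁, hσ₁⟩ := exists_semiconj_of_mapsTo hT.mapsTo
  obtain ⟨σ₂, hσ₂⟩ := exists_semiconj_of_mapsTo
    (range_outerEmb A t ▸ mapsTo_compl_of_involutive h.involutive hT.mapsTo)
  have h₁ := IsConnectedInvolution.of_isConnectedOn_range (innerEmb_strictMono A t) hσ₁ h.involutive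
    h.ne_self hTc
  have h₂ := IsConnectedInvolution.of_isConnectedOn_range (outerEmb_strictMono A t) hσ₂ h.involutive
    h.ne_self (range_outerEmb A t ▸ hT.isConnectedOn_compl h.involutive h.isConnectedOn_univ)
  have hroot : σ₂ ⟨0, by grind⟩ = A := by
    refine (outerEmb_strictMono A t).injective ?_
    rw [hσ₂, hAa]
    exact congrArg g (Fin.ext (val_outerEmb_of_lt A t hA0))
  refine ⟨⟨⟨k, hk⟩, ⟨σ₁, h₁⟩, ⟨σ₂, h₂⟩, t⟩, ?_, ?_⟩ <;> dsimp only [root] <;> rwa [hroot]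

theorem exists_semiconj (x : InsertionData m) :
    ∃ g, Semiconj (innerEmb x.root x.2.2.2) x.2.1.1 g ∧
      Semiconj (outerEmb x.root x.2.2.2) x.2.2.1.1 g :=
  exists_semiconj_semiconj (innerEmb_strictMono _ _).injective
    (outerEmb_strictMono _ _).injective (range_outerEmb _ _) _ _

noncomputable def glue (x : InsertionData m) : ConnectedInvolutions (2 * m) :=
  ⟨x.exists_semiconj.choose, isConnectedInvolution_of_semiconj_inner_outer x.2.1.2 x.2.2.1.2 rfl rfl
    x.exists_semiconj.choose_spec.1 x.exists_semiconj.choose_spec.2⟩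

theorem semiconj_glue (x : InsertionData m) :
    Semiconj (innerEmb x.root x.2.2.2) x.2.1.1 x.glue.1 ∧
      Semiconj (outerEmb x.root x.2.2.2) x.2.2.1.1 x.glue.1 :=
  x.exists_semiconj.choose_spec

theorem glue_surjective (hm : 2 ≤ m) : Surjective (glue (m := m)) := by
  rintro ⟨g, hg⟩
  obtain ⟨x, hg₁, hg₂⟩ := exists_semiconj_of_isConnectedInvolution hm hg
  refine ⟨x, Subtype.ext (funext (forall_of_range_eq_compl (range_outerEmb x.root x.2.2.2) ?_ ?_))⟩
  · exact fun q => (x.semiconj_glue.1 q).symm.trans (hg₁ q)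
  · exact fun p => (x.semiconj_glue.2 p).symm.trans (hg₂ p)

theorem isCut_glue (x : InsertionData m) (o : Fin (2 * m)) (ho : o.val = 0) :
    IsCut x.glue.1 (x.glue.1 o) (range (innerEmb x.root x.2.2.2)) ∧
      IsConnectedOn x.glue.1 (range (innerEmb x.root x.2.2.2)) := by
  obtain ⟨hg₁, hg₂⟩ := x.semiconj_glue
  have ho' : outerEmb x.root x.2.2.2 ⟨0, (x.root).pos⟩ = o :=
    Fin.ext ((val_outerEmb_eq_zero x.2.2.1.2.ne_self rfl rfl).trans ho.symm)
  rw [← ho']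
  exact ⟨isCut_of_semiconj rfl hg₁ hg₂,
    (isConnectedOn_range_iff (innerEmb_strictMono _ _) hg₁).2 x.2.1.2.isConnectedOn_univ⟩

theorem glue_injective : Injective (glue (m := m)) := by
  intro x y hxy
  replace hxy := congrArg Subtype.val hxy
  have hm : 0 < 2 * m := by have := Finset.mem_Ico.1 x.1.2; omega
  obtain ⟨hT, hTc⟩ := isCut_glue x ⟨0, hm⟩ rfl
  obtain ⟨hT', hTc'⟩ := isCut_glue y ⟨0, hm⟩ rfl
  obtain ⟨hx₁, hx₂⟩ := semiconj_glue x
  obtain ⟨hy₁, hy₂⟩ := semiconj_glue y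
  rw [hxy] at hT hTc hx₁ hx₂
  obtain ⟨⟨k, hk⟩, σ₁, σ₂, t⟩ := x
  obtain ⟨⟨k', hk'⟩, σ₁', σ₂', t'⟩ := y
  obtain ⟨rfl, hA, ht⟩ := eq_of_range_innerEmb_eq _ _ (hT.eq_of_isConnectedOn hT' hTc hTc')
  obtain rfl : t = t' := Fin.ext ht
  replace hA := Fin.ext hA
  obtain rfl : σ₂ = σ₂' := Subtype.ext (funext fun p => (outerEmb_strictMono _ t).injective
    (by rw [hx₂ p, hA, hy₂ p]))
  obtain rfl : σ₁ = σ₁' := Subtype.ext (funext fun q => (innerEmb_strictMono _ t).injective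
    (by rw [hx₁ q, hA, hy₁ q]))
  rfl

end InsertionData

theorem natCard_connectedInvolutions {m : ℕ} (hm : 2 ≤ m) :
    Nat.card (ConnectedInvolutions (2 * m)) = ∑ k ∈ Finset.Ico 1 m,
      (2 * k - 1) * (Nat.card (ConnectedInvolutions (2 * k)) *
        Nat.card (ConnectedInvolutions (2 * (m - k)))) := by
  rw [← Nat.card_eq_of_bijective _
    ⟨InsertionData.glue_injective, InsertionData.glue_surjective hm⟩, InsertionData,
    Nat.card_sigma, ← Finset.sum_coe_sort (Finset.Ico 1 m)]
  refine Fintype.sum_congr _ _ fun k => ?_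
  rw [Nat.card_prod, Nat.card_prod, Nat.card_eq_fintype_card (α := Fin _), Fintype.card_fin]
  ring

section Pairing

variable {n : ℕ} {σ τ : Fin n → Fin n}

def toPairing (σ : Fin n → Fin n) : Finset (Finset (Fin n)) :=
  Finset.univ.image fun i => {i, σ i}

theorem mem_toPairing {B : Finset (Fin n)} : B ∈ toPairing σ ↔ ∃ i, {i, σ i} = B := by
  simp [toPairing]

theorem pair_eq_of_mem (hσ : Involutive σ) {i j : Fin n} (h : i ∈ ({j, σ j} : Finset (Fin n))) :
    ({j, σ j} : Finset (Fin n)) = {i, σ i} := by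
  rcases Finset.mem_insert.1 h with rfl | h
  · rfl
  · rw [Finset.mem_singleton.1 h, hσ, Finset.pair_comm]

theorem isPairingOf_toPairing (hσ : Involutive σ) (hne : ∀ i, σ i ≠ i) :
    IsPairingOf (toPairing σ) := by
  refine ⟨⟨fun B hB => ?_, fun i => ⟨{i, σ i}, ⟨mem_toPairing.2 ⟨i, rfl⟩, by simp⟩, ?_⟩⟩,
    fun B hB => ?_⟩
  · obtain ⟨i, rfl⟩ := mem_toPairing.1 hB
    exact Finset.insert_nonempty i {σ i}
  · rintro B ⟨hB, hiB⟩
    obtain ⟨j, rfl⟩ := mem_toPairing.1 hB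
    exact pair_eq_of_mem hσ hiB
  · obtain ⟨i, rfl⟩ := mem_toPairing.1 hB
    exact Finset.card_pair (hne i).symm

theorem eq_of_toPairing_eq (hσ : ∀ i, σ i ≠ i) (hτ : Involutive τ)
    (h : toPairing σ = toPairing τ) : σ = τ := by
  funext i
  obtain ⟨j, hj⟩ := mem_toPairing.1 (h ▸ mem_toPairing.2 ⟨i, rfl⟩ : {i, σ i} ∈ toPairing τ)
  rw [pair_eq_of_mem hτ (hj ▸ Finset.mem_insert_self i {σ i})] at hj
  have hσi : σ i ∈ ({i, τ i} : Finset (Fin n)) := hj ▸ by simp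
  rcases Finset.mem_insert.1 hσi with h | h
  · exact absurd h (hσ i)
  · exact Finset.mem_singleton.1 h

theorem exists_toPairing_eq {P : Finset (Finset (Fin n))} (hP : IsPairingOf P) :
    ∃ σ : Fin n → Fin n, Involutive σ ∧ (∀ i, σ i ≠ i) ∧ toPairing σ = P := by
  have hpartner (i : Fin n) : ∃ j, j ≠ i ∧ {i, j} ∈ P := by
    obtain ⟨B, ⟨hB, hiB⟩, -⟩ := hP.1.2 i
    obtain ⟨x, y, hxy, rfl⟩ := Finset.card_eq_two.1 (hP.2 B hB)
    rcases Finset.mem_insert.1 hiB with rfl | h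
    · exact ⟨y, hxy.symm, hB⟩
    · obtain rfl := Finset.mem_singleton.1 h
      exact ⟨x, hxy, by rwa [Finset.pair_comm]⟩
  choose σ hne hmem using hpartner
  have hblock (i : Fin n) (B : Finset (Fin n)) (hB : B ∈ P) (hi : i ∈ B) : B = {i, σ i} :=
    (hP.1.2 i).unique ⟨hB, hi⟩ ⟨hmem i, Finset.mem_insert_self i {σ i}⟩
  have hinv : Involutive σ := fun i => by
    have hi : i ∈ ({σ i, σ (σ i)} : Finset (Fin n)) := hblock (σ i) _ (hmem i) (by simp) ▸ by simp
    rcases Finset.mem_insert.1 hi with h | h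
    · exact absurd h.symm (hne i)
    · exact (Finset.mem_singleton.1 h).symm
  refine ⟨σ, hinv, hne, Finset.ext fun B => ⟨fun hB => ?_, fun hB => ?_⟩⟩
  · obtain ⟨i, rfl⟩ := mem_toPairing.1 hB
    exact hmem i
  · obtain ⟨i, hi⟩ := hP.1.1 B hB
    exact mem_toPairing.2 ⟨i, (hblock i B hB hi).symm⟩

theorem isConnectedPartition_toPairing_iff (hσ : Involutive σ) :
    IsConnectedPartition (toPairing σ) ↔ IsConnectedOn σ univ := by
  have hblocks (s : Finset (Fin n)) :
      (∀ B ∈ toPairing σ, B ⊆ s ∨ Disjoint B s) ↔ MapsTo σ s s := by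
    simp only [mem_toPairing, forall_exists_index, forall_apply_eq_imp_iff]
    refine ⟨fun h i hi => ?_, fun h i => ?_⟩
    · refine (h i).elim (fun h => h (by simp)) fun h => ?_
      exact absurd hi (Finset.disjoint_left.1 h (Finset.mem_insert_self i {σ i}))
    · by_cases hi : i ∈ s
      · exact .inl (Finset.insert_subset hi (Finset.singleton_subset_iff.2 (h hi)))
      · refine .inr (Finset.disjoint_left.2 fun x hx hxs => ?_)
        rcases Finset.mem_insert.1 hx with rfl | hx
        · exact hi hxs
        · rw [Finset.mem_singleton.1 hx] at hxs
          exact hi (hσ i ▸ h hxs)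
  rw [isConnectedOn_univ_iff]
  constructor
  · intro hC S hS hconv
    obtain rfl | hne := S.eq_empty_or_nonempty
    · exact .inl rfl
    obtain ⟨l, r, rfl⟩ := hconv.exists_eq_Icc hne
    have := hC (Finset.Icc l r) ⟨l, r, rfl⟩ ((hblocks _).2 (by rwa [Finset.coe_Icc]))
    rwa [← Finset.coe_eq_empty, ← Finset.coe_eq_univ, Finset.coe_Icc] at this
  · rintro h s ⟨a, b, rfl⟩ hs
    have := h _ ((hblocks _).1 hs) (by rw [Finset.coe_Icc]; exact ordConnected_Icc)
    rwa [Finset.coe_eq_empty, Finset.coe_eq_univ] at this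

end Pairing

theorem connPairingCount_eq_natCard (n : ℕ) :
    connPairingCount n = Nat.card (ConnectedInvolutions (2 * n)) := by
  refine (Nat.card_eq_of_bijective (fun σ : ConnectedInvolutions (2 * n) =>
    ⟨toPairing σ.1, isPairingOf_toPairing σ.2.involutive σ.2.ne_self,
      (isConnectedPartition_toPairing_iff σ.2.involutive).2 σ.2.isConnectedOn_univ⟩)
    ⟨fun σ τ h => ?_, ?_⟩).symm
  · exact Subtype.ext (eq_of_toPairing_eq σ.2.ne_self τ.2.involutive (congrArg Subtype.val h))
  · rintro ⟨P, hP, hC⟩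
    obtain ⟨σ, hinv, hne, rfl⟩ := exists_toPairing_eq hP
    exact ⟨⟨σ, hinv, hne, (isConnectedPartition_toPairing_iff hinv).1 hC⟩, rfl⟩

theorem sum_Ico_two_mul_sub_one_mul (c : ℕ → ℕ) (m : ℕ) :
    ∑ k ∈ Finset.Ico 1 m, (2 * k - 1) * (c k * c (m - k)) =
      (m - 1) * ∑ k ∈ Finset.Ico 1 m, c k * c (m - k) := by
  have hreflect : ∑ k ∈ Finset.Ico 1 m, (2 * (m - k) - 1) * (c k * c (m - k)) =
      ∑ k ∈ Finset.Ico 1 m, (2 * k - 1) * (c k * c (m - k)) := by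
    refine Finset.sum_nbij' (m - ·) (m - ·) ?_ ?_ ?_ ?_ ?_ <;> intro k hk <;>
      simp only [Finset.mem_Ico] at hk ⊢
    any_goals omega
    rw [Nat.sub_sub_self (by omega), mul_comm (c k)]
  apply Nat.eq_of_mul_eq_mul_left two_pos
  calc 2 * ∑ k ∈ Finset.Ico 1 m, (2 * k - 1) * (c k * c (m - k))
      = ∑ k ∈ Finset.Ico 1 m, ((2 * k - 1) + (2 * (m - k) - 1)) * (c k * c (m - k)) := by
        rw [two_mul]
        nth_rewrite 2 [← hreflect]
        rw [← Finset.sum_add_distrib]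
        exact Finset.sum_congr rfl fun k _ => (add_mul _ _ _).symm
    _ = ∑ k ∈ Finset.Ico 1 m, 2 * (m - 1) * (c k * c (m - k)) :=
        Finset.sum_congr rfl fun k hk => by
          rw [Finset.mem_Ico] at hk
          congr 1
          omega
    _ = 2 * ((m - 1) * ∑ k ∈ Finset.Ico 1 m, c k * c (m - k)) := by
        rw [← Finset.mul_sum, mul_assoc]

end ConnectedPairing

/-- The number of connected (irreducible) pairings `c_{2n}` of `{1,…,2n}` satisfies the
Riordan recursion `c_{2n} = (n-1) · Σ_{i=1}^{n-1} c_{2i} c_{2(n-i)}` for `n ≥ 2`,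
with `c_2 = 1`. -/
theorem connPairing_riordan_recursion :
    connPairingCount 1 = 1 ∧
    ∀ n : ℕ, 2 ≤ n →
      connPairingCount n =
        (n - 1) * ∑ i ∈ Finset.Ico 1 n, connPairingCount i * connPairingCount (n - i) := by
  simp only [ConnectedPairing.connPairingCount_eq_natCard]
  refine ⟨ConnectedPairing.natCard_connectedInvolutions_two, fun n hn => ?_⟩
  rw [ConnectedPairing.natCard_connectedInvolutions hn,
    ConnectedPairing.sum_Ico_two_mul_sub_one_mul]
end

section
/- For the sequence s defined by s_0 = 1 and s_{2n} = n Σ_{i=0}^{n-1} s_{2i} s_{2(n-i-1)}, one has s_{2n} = Σ over planar rooted binary trees t with n vertices of the tree factorial t!. -/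
/-- Planar rooted binary trees. -/
inductive BTree : Type
  | nil : BTree
  | node : BTree → BTree → BTree
  deriving DecidableEq

/-- Number of vertices of a planar rooted binary tree. -/
def BTree.size : BTree → ℕ
  | .nil => 0
  | .node l r => l.size + r.size + 1

/-- The tree factorial: the empty tree has factorial 1, and a tree with `n > 0` vertices,
left branch `t₁` and right branch `t₂` has factorial `n · t₁! · t₂!`. -/
def BTree.tfact : BTree → ℕ
  | .nil => 1
  | .node l r => (l.size + r.size + 1) * l.tfact * r.tfact

/-- The finset of all planar rooted binary trees with `n` vertices. -/
def treesOf : ℕ → Finset BTree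
  | 0 => {BTree.nil}
  | (n + 1) =>
      (Finset.range (n + 1)).attach.biUnion fun k =>
        ((treesOf k.1) ×ˢ (treesOf (n - k.1))).image fun p => BTree.node p.1 p.2
  decreasing_by
  · exact Finset.mem_range.mp k.2
  · exact Nat.lt_succ_of_le (Nat.sub_le n k.1)

/-!
Both sides satisfy the same recursion. A tree with `n + 1` vertices is a root with a left
branch of some size `k ≤ n` and a right branch of size `n - k`, and its factorial is
`(n + 1)` times the factorials of its branches; so `T n := ∑ t ∈ treesOf n, t!` satisfies
`T (n + 1) = (n + 1) * ∑ k < n + 1, T k * T (n - k)`, which is the recursion of `s (2 * n)`.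
-/

open Finset

namespace BTree

theorem treesOf_succ (n : ℕ) :
    treesOf (n + 1) = (range (n + 1)).biUnion fun k =>
      (treesOf k ×ˢ treesOf (n - k)).image fun p => node p.1 p.2 := by
  rw [treesOf]
  exact attach_biUnion (f := fun k => (treesOf k ×ˢ treesOf (n - k)).image fun p => node p.1 p.2)

theorem size_eq_of_mem_treesOf {n : ℕ} {t : BTree} (ht : t ∈ treesOf n) : t.size = n := by
  induction n using Nat.strong_induction_on generalizing t with
  | _ n ih =>
    match n, ht with
    | 0, ht =>
      rw [treesOf, mem_singleton] at ht
      simp [ht, size]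
    | n + 1, ht =>
      simp only [treesOf_succ, mem_biUnion, mem_image, mem_product] at ht
      obtain ⟨k, hk, ⟨l, r⟩, ⟨hl, hr⟩, rfl⟩ := ht
      have hkn := mem_range.mp hk
      rw [size, ih k hkn hl, ih (n - k) (by omega) hr]
      omega

theorem tfact_node_of_mem_treesOf {n k : ℕ} {l r : BTree} (hl : l ∈ treesOf k)
    (hr : r ∈ treesOf (n - k)) (hk : k ≤ n) :
    (node l r).tfact = (n + 1) * l.tfact * r.tfact := by
  rw [tfact, size_eq_of_mem_treesOf hl, size_eq_of_mem_treesOf hr, Nat.add_sub_cancel' hk]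

theorem sum_tfact_treesOf_succ (n : ℕ) :
    ∑ t ∈ treesOf (n + 1), t.tfact =
      (n + 1) * ∑ k ∈ range (n + 1),
        (∑ t ∈ treesOf k, t.tfact) * ∑ t ∈ treesOf (n - k), t.tfact := by
  -- The summands have pairwise different left-branch sizes.
  have disjoint : (range (n + 1) : Set ℕ).PairwiseDisjoint fun k =>
      (treesOf k ×ˢ treesOf (n - k)).image fun p => node p.1 p.2 := by
    intro a _ b _ hab
    simp only [Function.onFun, disjoint_left, mem_image, mem_product]
    rintro _ ⟨⟨l, r⟩, ⟨hl, -⟩, rfl⟩ ⟨⟨l', r'⟩, ⟨hl', -⟩, heq⟩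
    exact hab (by rw [← size_eq_of_mem_treesOf hl, ← size_eq_of_mem_treesOf hl',
      (node.inj heq).1])
  rw [treesOf_succ, sum_biUnion disjoint, mul_sum]
  refine sum_congr rfl fun k hk => ?_
  rw [sum_image fun p _ q _ h => Prod.ext (node.inj h).1 (node.inj h).2, sum_product, sum_mul_sum, mul_sum]
  refine sum_congr rfl fun l hl => ?_
  rw [mul_sum]
  refine sum_congr rfl fun r hr => ?_
  rw [tfact_node_of_mem_treesOf hl hr (Nat.lt_succ_iff.mp (mem_range.mp hk)), mul_assoc]

end BTree

/-- For `s` defined by `s_0 = 1` and `s_{2n} = n Σ_{i=0}^{n-1} s_{2i} s_{2(n-i-1)}`,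
`s_{2n}` equals the sum of the tree factorials `t!` over all planar rooted binary trees
`t` with `n` vertices. -/
theorem s_eq_sum_tree_factorials (s : ℕ → ℕ) (h0 : s 0 = 1)
    (hrec : ∀ n : ℕ, 1 ≤ n →
      s (2 * n) = n * ∑ i ∈ Finset.range n, s (2 * i) * s (2 * (n - i - 1))) :
    ∀ n : ℕ, s (2 * n) = ∑ t ∈ treesOf n, t.tfact := by
  intro n
  induction n using Nat.strong_induction_on with
  | _ n ih =>
    match n with
    | 0 => simp [treesOf, BTree.tfact, h0]
    | n + 1 =>
      rw [hrec (n + 1) (Nat.le_add_left 1 n), BTree.sum_tfact_treesOf_succ]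
      congr 1
      refine sum_congr rfl fun i hi => ?_
      rw [ih i (mem_range.mp hi), Nat.sub_right_comm, Nat.add_sub_cancel, ih (n - i) (by omega)]
end

section
/- For a planar rooted binary tree t with n vertices, the tree factorial t! equals the number of anti-increasing labelings of t with the distinct numbers 1, 2, ..., n. -/
/-- Planar rooted binary trees with an integer label at each vertex. -/
inductive LTree : Type
  | nil : LTree
  | node : LTree → LTree → ℕ → LTree
  deriving DecidableEq

/-- The underlying unlabeled tree. -/
def LTree.shape : LTree → BTree
  | .nil => BTree.nil
  | .node l r _ => BTree.node l.shape r.shape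

/-- The multiset of labels used. -/
def LTree.labels : LTree → Multiset ℕ
  | .nil => 0
  | .node l r k => k ::ₘ (l.labels + r.labels)

/-- A labeling is anti-increasing if at every vertex all labels of the left subtree are
strictly smaller than all labels of the right subtree. -/
def LTree.AntiInc : LTree → Prop
  | .nil => True
  | .node l r _ => l.AntiInc ∧ r.AntiInc ∧ ∀ a ∈ l.labels, ∀ b ∈ r.labels, a < b

/-!
We count anti-increasing labelings of `t` by an arbitrary set `s` of `t.size` distinct labels,
by induction on `t`. For `t = node l r`, the root may carry any `k ∈ s`. The anti-increasing
condition at the root then forces the left subtree to carry exactly the `l.size` smallest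
elements of `s \ {k}` and the right subtree the rest. This gives `t.size * l! * r!` labelings.
-/

namespace Multiset

variable {α : Type*} [LinearOrder α]

theorem sort_add_of_forall_le {A B : Multiset α} (h : ∀ a ∈ A, ∀ b ∈ B, a ≤ b) :
    (A + B).sort = A.sort ++ B.sort := by
  refine List.Perm.eq_of_pairwise' (pairwise_sort _ _) ?_ ?_
  · exact List.pairwise_append.2 ⟨pairwise_sort _ _, pairwise_sort _ _,
      fun a ha b hb => h a ((mem_sort _).1 ha) b ((mem_sort _).1 hb)⟩
  · rw [← coe_eq_coe, ← coe_add, sort_eq, sort_eq, sort_eq]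

def lowerPart (m : Multiset α) (j : ℕ) : Multiset α := (m.sort.take j : List α)

def upperPart (m : Multiset α) (j : ℕ) : Multiset α := (m.sort.drop j : List α)

theorem lowerPart_add_upperPart (m : Multiset α) (j : ℕ) : lowerPart m j + upperPart m j = m := by
  rw [lowerPart, upperPart, coe_add, List.take_append_drop, sort_eq]

theorem card_lowerPart {m : Multiset α} {j : ℕ} (h : j ≤ card m) : card (lowerPart m j) = j := by
  simp [lowerPart, h]

theorem card_upperPart (m : Multiset α) (j : ℕ) : card (upperPart m j) = card m - j := by
  simp [upperPart]

theorem lowerPart_add {A B : Multiset α} (h : ∀ a ∈ A, ∀ b ∈ B, a ≤ b) :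
    lowerPart (A + B) (card A) = A := by
  rw [lowerPart, sort_add_of_forall_le h, ← length_sort (· ≤ ·) (s := A), List.take_left, sort_eq]

theorem upperPart_add {A B : Multiset α} (h : ∀ a ∈ A, ∀ b ∈ B, a ≤ b) :
    upperPart (A + B) (card A) = B := by
  rw [upperPart, sort_add_of_forall_le h, ← length_sort (· ≤ ·) (s := A), List.drop_left, sort_eq]

theorem lowerPart_lt_upperPart {m : Multiset α} (hm : m.Nodup) (j : ℕ) :
    ∀ a ∈ lowerPart m j, ∀ b ∈ upperPart m j, a < b := by
  have hlt : (m.sort (· ≤ ·)).Pairwise (· < ·) :=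
    (pairwise_sort m _).imp₂ (fun _ _ => lt_of_le_of_ne) (coe_nodup.1 (by rwa [sort_eq]))
  rw [← List.take_append_drop j (m.sort (· ≤ ·)), List.pairwise_append] at hlt
  exact fun a ha b hb => hlt.2.2 a (mem_coe.1 ha) b (mem_coe.1 hb)

theorem Nodup.lowerPart {m : Multiset α} (hm : m.Nodup) (j : ℕ) : (lowerPart m j).Nodup :=
  (nodup_add.1 ((lowerPart_add_upperPart m j).symm ▸ hm)).1

theorem Nodup.upperPart {m : Multiset α} (hm : m.Nodup) (j : ℕ) : (upperPart m j).Nodup :=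
  (nodup_add.1 ((lowerPart_add_upperPart m j).symm ▸ hm)).2.1

end Multiset

open Multiset

theorem LTree.card_labels (u : LTree) : card u.labels = u.shape.size := by
  induction u with
  | nil => rfl
  | node l r k ihl ihr => simp [labels, shape, BTree.size, ihl, ihr]

namespace BTree

theorem tfact_pos : ∀ t : BTree, 0 < t.tfact
  | nil => Nat.one_pos
  | node l r => Nat.mul_pos (Nat.mul_pos (Nat.succ_pos _) l.tfact_pos) r.tfact_pos

abbrev AntiIncLabeling (t : BTree) (s : Multiset ℕ) : Type :=
  {u : LTree // u.shape = t ∧ u.AntiInc ∧ u.labels = s}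

variable {l r : BTree} {s : Multiset ℕ}

def graft (hs : s.Nodup) :
    (Σ k : s.toFinset, l.AntiIncLabeling (lowerPart (s.erase k) l.size) ×
      r.AntiIncLabeling (upperPart (s.erase k) l.size)) → (node l r).AntiIncLabeling s :=
  fun p => ⟨.node p.2.1.1 p.2.2.1 p.1, by
    obtain ⟨⟨k, hk⟩, ⟨ul, hl, hla, hll⟩, ⟨ur, hr, hra, hrl⟩⟩ := p
    dsimp only
    refine ⟨by rw [LTree.shape, hl, hr], ⟨hla, hra, ?_⟩, ?_⟩
    · rw [hll, hrl]
      exact lowerPart_lt_upperPart (hs.erase k) l.size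
    · rw [LTree.labels, hll, hrl, lowerPart_add_upperPart, cons_erase (mem_toFinset.1 hk)]⟩

theorem graft_injective (hs : s.Nodup) : Function.Injective (graft (l := l) (r := r) hs) := by
  rintro ⟨⟨k, _⟩, ⟨ul, _⟩, ⟨ur, _⟩⟩ ⟨⟨k', _⟩, ⟨ul', _⟩, ⟨ur', _⟩⟩ h
  simp only [graft, Subtype.mk.injEq, LTree.node.injEq] at h
  obtain ⟨rfl, rfl, rfl⟩ := h
  rfl

theorem graft_surjective (hs : s.Nodup) : Function.Surjective (graft (l := l) (r := r) hs) := by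
  rintro ⟨_ | ⟨ul, ur, k⟩, hshape, hanti, hlabels⟩
  · cases hshape
  obtain ⟨hl, hr⟩ := BTree.node.inj hshape
  obtain ⟨hla, hra, hlr⟩ := hanti
  have hk : k ∈ s := hlabels ▸ mem_cons_self k _
  have hsplit : s.erase k = ul.labels + ur.labels := by
    rw [← hlabels, LTree.labels, erase_cons_head]
  have hsize : l.size = card ul.labels := by rw [LTree.card_labels, hl]
  have hle : ∀ a ∈ ul.labels, ∀ b ∈ ur.labels, a ≤ b := fun a ha b hb => (hlr a ha b hb).le
  exact ⟨⟨⟨k, mem_toFinset.2 hk⟩,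
    ⟨ul, hl, hla, by rw [hsplit, hsize, lowerPart_add hle]⟩,
    ⟨ur, hr, hra, by rw [hsplit, hsize, upperPart_add hle]⟩⟩, rfl⟩

theorem card_antiIncLabeling (t : BTree) {s : Multiset ℕ} (hs : s.Nodup) (hcard : card s = t.size) :
    Nat.card (t.AntiIncLabeling s) = t.tfact := by
  induction t generalizing s with
  | nil =>
    obtain rfl : s = 0 := card_eq_zero.1 hcard
    refine Nat.card_eq_one_iff_exists.2 ⟨⟨.nil, rfl, trivial, rfl⟩, ?_⟩
    rintro ⟨_ | _, hshape, -, -⟩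
    · rfl
    · cases hshape
  | node l r ihl ihr =>
    have hcard_erase : ∀ k ∈ s.toFinset, card (s.erase k) = l.size + r.size := fun k hk => by
      rw [card_erase_of_mem (mem_toFinset.1 hk), hcard]; rfl
    have hl : ∀ k : s.toFinset,
        Nat.card (l.AntiIncLabeling (lowerPart (s.erase k) l.size)) = l.tfact := fun k =>
      ihl ((hs.erase k.1).lowerPart _) (card_lowerPart (by rw [hcard_erase k k.2]; omega))
    have hr : ∀ k : s.toFinset,
        Nat.card (r.AntiIncLabeling (upperPart (s.erase k) l.size)) = r.tfact := fun k =>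
      ihr ((hs.erase k.1).upperPart _) (by rw [card_upperPart, hcard_erase k k.2]; omega)
    have := fun k => Nat.finite_of_card_ne_zero ((hl k).trans_ne l.tfact_pos.ne')
    have := fun k => Nat.finite_of_card_ne_zero ((hr k).trans_ne r.tfact_pos.ne')
    calc Nat.card ((node l r).AntiIncLabeling s)
        = Nat.card (Σ k : s.toFinset, l.AntiIncLabeling (lowerPart (s.erase k) l.size) ×
            r.AntiIncLabeling (upperPart (s.erase k) l.size)) :=
          (Nat.card_eq_of_bijective _ ⟨graft_injective hs, graft_surjective hs⟩).symm
      _ = ∑ _k : s.toFinset, l.tfact * r.tfact := by simp only [Nat.card_sigma, Nat.card_prod, hl, hr]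
      _ = (node l r).tfact := by
          rw [Finset.sum_const, Finset.card_univ, Fintype.card_coe, toFinset_card_of_nodup hs,
            hcard, smul_eq_mul, size, tfact, mul_assoc]

end BTree

/-- For a planar rooted binary tree `t` with `n` vertices, the tree factorial `t!` equals
the number of anti-increasing labelings of `t` with the distinct numbers `1, 2, …, n`. -/
theorem tfact_eq_card_antiInc_labelings (t : BTree) :
    t.tfact = Nat.card {u : LTree //
      u.shape = t ∧ u.AntiInc ∧ u.labels = (Finset.Icc 1 t.size).val} :=
  (t.card_antiIncLabeling (Finset.Icc 1 t.size).nodup (by simp)).symm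
end

section
/- If a sequence of moments m_n has classical cumulants c_n, then its free cumulants are given by κ_n = Σ over connected partitions π of [n] of Π_{V ∈ π} c_{|V|}. -/
/-- A partition is noncrossing if no two distinct blocks cross. -/
def IsNoncrossing {n : ℕ} (P : Finset (Finset (Fin n))) : Prop :=
  ∀ B ∈ P, ∀ C ∈ P, B ≠ C →
    ¬∃ a b c d : Fin n, a < b ∧ b < c ∧ c < d ∧ a ∈ B ∧ c ∈ B ∧ b ∈ C ∧ d ∈ C


/-!
Every partition `P` of a finite linear order has a noncrossing closure `σ` (the finest noncrossing
partition coarser than `P`), and `σ` is the unique noncrossing partition coarser than `P` on each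
of whose blocks `P` restricts to a connected partition. So partitions correspond to pairs of a
noncrossing `σ` and a connected partition of each block of `σ`; as connectedness only depends on
the order type of a block, this gives
  `∑_π ∏_{V ∈ π} c_{|V|} = ∑_{σ noncrossing} ∏_{W ∈ σ} K_{|W|}`,
with `K_k = ∑_{π connected partition of [k]} ∏_{V ∈ π} c_{|V|}`. Thus `K` is a sequence of free
cumulants of `m`, and free cumulants are determined by the moments: the top partition contributes
`κ_n` and all others only `κ_k` with `k < n`.
-/

open Finset

namespace Finset

lemma map_filter_mem_eq {α β : Type*} [DecidableEq β] {s : Finset α} {f : α ↪ β}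
    {B : Finset β} (hB : B ⊆ s.map f) : (s.filter (f · ∈ B)).map f = B := by
  ext y
  simp only [mem_map, mem_filter]
  refine ⟨fun ⟨x, ⟨_, hxB⟩, hxy⟩ => hxy ▸ hxB, fun hy => ?_⟩
  obtain ⟨x, hx, rfl⟩ := mem_map.1 (hB hy)
  exact ⟨x, ⟨hx, hy⟩, rfl⟩

variable {α : Type*} [LinearOrder α]

def Crosses (B C : Finset α) : Prop :=
  ∃ a b c d, a < b ∧ b < c ∧ c < d ∧ a ∈ B ∧ c ∈ B ∧ b ∈ C ∧ d ∈ C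

lemma Crosses.mono {B C B' C' : Finset α} (h : B.Crosses C) (hB : B ⊆ B') (hC : C ⊆ C') :
    B'.Crosses C' := by
  obtain ⟨a, b, c, d, hab, hbc, hcd, ha, hc, hb, hd⟩ := h
  exact ⟨a, b, c, d, hab, hbc, hcd, hB ha, hB hc, hC hb, hC hd⟩

end Finset

lemma Set.OrdConnected.exists_ordConnected_preimage_eq {α β : Type*} [Preorder α] [Preorder β]
    {I : Set α} (hI : I.OrdConnected) (f : α ↪o β) :
    ∃ J : Set β, J.OrdConnected ∧ f ⁻¹' J = I := by
  refine ⟨{y | ∃ a ∈ I, ∃ b ∈ I, f a ≤ y ∧ y ≤ f b},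
    ⟨fun _ ⟨a, ha, _, _, hay, _⟩ _ ⟨_, _, b, hb, _, hyb⟩ _ hy =>
      ⟨a, ha, b, hb, hay.trans hy.1, hy.2.trans hyb⟩⟩, ?_⟩
  ext x
  exact ⟨fun ⟨a, ha, b, hb, hax, hxb⟩ =>
    hI.out ha hb ⟨f.le_iff_le.1 hax, f.le_iff_le.1 hxb⟩, fun hx => ⟨x, hx, x, hx, le_rfl, le_rfl⟩⟩

namespace Finpartition

section Map

variable {α β : Type*} [DecidableEq α] [DecidableEq β] {s : Finset α} (f : α ↪ β)

def finsetMap (P : Finpartition s) : Finpartition (s.map f) :=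
  ofExistsUnique (P.parts.map ⟨Finset.map f, Finset.map_injective f⟩)
    (by
      simp only [mem_map, forall_exists_index, and_imp]
      rintro _ B hB rfl
      exact map_subset_map.2 (P.le hB))
    (by
      simp only [mem_map, forall_exists_index, and_imp]
      rintro _ x hx rfl
      obtain ⟨B, ⟨hB, hxB⟩, huniq⟩ := P.existsUnique_mem hx
      refine ⟨B.map f, ⟨⟨B, hB, rfl⟩, mem_map_of_mem f hxB⟩, ?_⟩
      rintro _ ⟨⟨C, hC, rfl⟩, hxC⟩
      rw [huniq C ⟨hC, (mem_map' f).1 hxC⟩]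
      rfl)
    (by simp [P.empty_notMem_parts])

lemma finsetMap_parts (P : Finpartition s) :
    (P.finsetMap f).parts = P.parts.map ⟨Finset.map f, Finset.map_injective f⟩ := rfl

lemma finsetMap_injective : Function.Injective (finsetMap (s := s) f) := fun _ _ h =>
  Finpartition.ext (Finset.map_injective _ (congrArg parts h))

lemma finsetMap_surjective : Function.Surjective (finsetMap (s := s) f) := by
  intro Q
  let P : Finpartition s := ofExistsUnique (Q.parts.image fun B => s.filter (f · ∈ B))
    (by simp)
    (by
      intro x hx
      obtain ⟨B, ⟨hB, hxB⟩, huniq⟩ := Q.existsUnique_mem (mem_map_of_mem f hx)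
      refine ⟨s.filter (f · ∈ B), ⟨mem_image_of_mem _ hB, mem_filter.2 ⟨hx, hxB⟩⟩, ?_⟩
      rintro _ ⟨hC', hxC⟩
      obtain ⟨C, hC, rfl⟩ := mem_image.1 hC'
      rw [huniq C ⟨hC, (mem_filter.1 hxC).2⟩])
    (by
      simp only [mem_image, not_exists, not_and]
      intro B hB hBs
      have := map_filter_mem_eq (Q.le hB)
      rw [hBs, map_empty] at this
      exact Q.empty_notMem_parts (this ▸ hB))
  refine ⟨P, Finpartition.ext ?_⟩
  rw [finsetMap_parts, map_eq_image]
  simp only [P, ofExistsUnique_parts, image_image]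
  exact (image_congr fun B hB => map_filter_mem_eq (Q.le hB)).trans image_id'

end Map

open scoped Classical

variable {α : Type*} [LinearOrder α] {s : Finset α}

def IsNoncrossing (P : Finpartition s) : Prop :=
  (P.parts : Set (Finset α)).Pairwise fun B C => ¬B.Crosses C

/-- Convex sets `I` rather than intervals `[a, b]` of the ambient order, so that the notion is
invariant under order embeddings. -/
def IsConnected (P : Finpartition s) : Prop :=
  ∀ I : Set α, I.OrdConnected →
    (∀ B ∈ P.parts, ↑B ⊆ I ∨ Disjoint (↑B : Set α) I) → ↑s ⊆ I ∨ Disjoint (↑s : Set α) I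

noncomputable def cut (s : Finset α) (I : Set α) : Finpartition s :=
  ofErase {s.filter (· ∈ I), s.filter (· ∉ I)}
    (supIndep_iff_pairwiseDisjoint.2 <| by
      rw [coe_pair]
      exact Set.pairwise_pair.2 fun _ => ⟨disjoint_filter_filter_not s s _,
        (disjoint_filter_filter_not s s _).symm⟩)
    (by simp [filter_union_filter_not_eq])

lemma mem_cut_parts {I : Set α} {X : Finset α} :
    X ∈ (cut s I).parts ↔
      X.Nonempty ∧ (X = s.filter (· ∈ I) ∨ X = s.filter (· ∉ I)) := by
  simp [cut, nonempty_iff_ne_empty]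

lemma mem_top_parts (hs : s.Nonempty) : s ∈ (⊤ : Finpartition s).parts := by
  obtain ⟨X, hX⟩ := (⊤ : Finpartition s).parts_nonempty hs.ne_empty
  obtain rfl := mem_singleton.1 (parts_top_subset s hX)
  exact hX

lemma parts_top_of_nonempty (hs : s.Nonempty) : (⊤ : Finpartition s).parts = {s} :=
  Subset.antisymm (parts_top_subset s) (singleton_subset_iff.2 (mem_top_parts hs))

lemma eq_top_of_mem_parts {P : Finpartition s} (hs : s ∈ P.parts) : P = ⊤ :=
  le_antisymm le_top fun _ hB => ⟨s, hs, (⊤ : Finpartition s).le hB⟩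

lemma bind_le (σ : Finpartition s) (Q : ∀ W ∈ σ.parts, Finpartition W) :
    σ.bind Q ≤ σ := by
  intro B hB
  obtain ⟨W, hW, hBW⟩ := mem_bind.1 hB
  exact ⟨W, hW, (Q W hW).le hBW⟩

lemma mem_restrict_parts_of_le {P σ : Finpartition s} (hPσ : P ≤ σ) {W B : Finset α}
    (hW : W ∈ σ.parts) : B ∈ (P.restrict (σ.le hW)).parts ↔ B ∈ P.parts ∧ B ⊆ W := by
  simp only [restrict, mem_erase, mem_image, inf_eq_inter, bot_eq_empty, ne_eq,
    ← nonempty_iff_ne_empty]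
  constructor
  · rintro ⟨⟨x, hx⟩, B', hB', rfl⟩
    obtain ⟨V, hV, hB'V⟩ := hPσ hB'
    obtain rfl : V = W := σ.eq_of_mem_parts hV hW (hB'V (mem_inter.1 hx).1) (mem_inter.1 hx).2
    rw [inter_eq_left.2 hB'V]
    exact ⟨hB', hB'V⟩
  · rintro ⟨hB, hBW⟩
    exact ⟨P.nonempty_of_mem_parts hB, B, hB, inter_eq_left.2 hBW⟩

lemma restrict_bind (σ : Finpartition s) (Q : ∀ W ∈ σ.parts, Finpartition W) {W : Finset α}
    (hW : W ∈ σ.parts) : (σ.bind Q).restrict (σ.le hW) = Q W hW := by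
  ext B
  rw [mem_restrict_parts_of_le (bind_le σ Q) hW, mem_bind]
  constructor
  · rintro ⟨⟨V, hV, hBV⟩, hBW⟩
    obtain ⟨x, hx⟩ := (Q V hV).nonempty_of_mem_parts hBV
    obtain rfl := σ.eq_of_mem_parts hV hW ((Q V hV).le hBV hx) (hBW hx)
    exact hBV
  · exact fun hB => ⟨⟨W, hW, hB⟩, (Q W hW).le hB⟩

lemma bind_restrict_of_le {P σ : Finpartition s} (hPσ : P ≤ σ) :
    σ.bind (fun _ hW => P.restrict (σ.le hW)) = P := by
  ext B
  rw [mem_bind]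
  constructor
  · rintro ⟨_, hW, hB⟩
    exact ((mem_restrict_parts_of_le hPσ hW).1 hB).1
  · intro hB
    obtain ⟨W, hW, hBW⟩ := hPσ hB
    exact ⟨W, hW, (mem_restrict_parts_of_le hPσ hW).2 ⟨hB, hBW⟩⟩

lemma prod_bind_parts {M : Type*} [CommMonoid M] (σ : Finpartition s)
    (Q : ∀ W ∈ σ.parts, Finpartition W) (f : Finset α → M) :
    ∏ B ∈ (σ.bind Q).parts, f B =
      ∏ W ∈ σ.parts.attach, ∏ B ∈ (Q W.1 W.2).parts, f B := by
  rw [bind_parts]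
  refine prod_biUnion fun W _ W' _ hWW' => disjoint_left.2 fun B hB hB' => hWW' ?_
  obtain ⟨x, hx⟩ := (Q W.1 W.2).nonempty_of_mem_parts hB
  exact Subtype.ext (σ.eq_of_mem_parts W.2 W'.2 ((Q _ _).le hB hx) ((Q _ _).le hB' hx))

noncomputable def cutBlock (σ : Finpartition s) (W : Finset α) (I : Set α) : Finpartition s :=
  σ.bind fun V _ => if V = W then cut V I else ⊤

lemma mem_cutBlock_parts {σ : Finpartition s} {W : Finset α} (hW : W ∈ σ.parts) {I : Set α}
    (hWI : (W.filter (· ∈ I)).Nonempty) : W.filter (· ∈ I) ∈ (σ.cutBlock W I).parts := by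
  refine mem_bind.2 ⟨W, hW, ?_⟩
  rw [if_pos rfl, mem_cut_parts]
  exact ⟨hWI, Or.inl rfl⟩

lemma le_cutBlock {P σ : Finpartition s} (hPσ : P ≤ σ) {W : Finset α} (hW : W ∈ σ.parts)
    {I : Set α}
    (hresp : ∀ B ∈ (P.restrict (σ.le hW)).parts, ↑B ⊆ I ∨ Disjoint (↑B : Set α) I) :
    P ≤ σ.cutBlock W I := by
  intro B hB
  obtain ⟨V, hV, hBV⟩ := hPσ hB
  have hBne := P.nonempty_of_mem_parts hB
  by_cases hVW : V = W
  · subst hVW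
    rcases hresp B ((mem_restrict_parts_of_le hPσ hW).2 ⟨hB, hBV⟩) with hBI | hBI
    · have hBX : B ⊆ V.filter (· ∈ I) := fun x hx => mem_filter.2 ⟨hBV hx, hBI hx⟩
      exact ⟨_, mem_cutBlock_parts hW (hBne.mono hBX), hBX⟩
    · have hBX : B ⊆ V.filter (· ∉ I) := fun x hx =>
        mem_filter.2 ⟨hBV hx, Set.disjoint_left.1 hBI hx⟩
      refine ⟨_, mem_bind.2 ⟨V, hV, ?_⟩, hBX⟩
      rw [if_pos rfl, mem_cut_parts]
      exact ⟨hBne.mono hBX, Or.inr rfl⟩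
  · refine ⟨V, mem_bind.2 ⟨V, hV, ?_⟩, hBV⟩
    rw [if_neg hVW]
    exact mem_top_parts (hBne.mono hBV)

lemma isNoncrossing_top : (⊤ : Finpartition s).IsNoncrossing :=
  (parts_top_subsingleton s).pairwise _

lemma isNoncrossing_cut {I : Set α} (hI : I.OrdConnected) : (cut s I).IsNoncrossing := by
  rintro X hX Y hY hXY ⟨a, b, c, d, hab, hbc, hcd, ha, hc, hb, hd⟩
  rw [mem_coe, mem_cut_parts] at hX hY
  obtain ⟨-, rfl | rfl⟩ := hX <;> obtain ⟨-, rfl | rfl⟩ := hY <;>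
    simp only [mem_filter] at ha hb hc hd
  · exact hXY rfl
  · exact hb.2 (hI.out ha.2 hc.2 ⟨hab.le, hbc.le⟩)
  · exact hc.2 (hI.out hb.2 hd.2 ⟨hbc.le, hcd.le⟩)
  · exact hXY rfl

namespace IsNoncrossing

variable {P Q : Finpartition s}

lemma inf (hP : P.IsNoncrossing) (hQ : Q.IsNoncrossing) : (P ⊓ Q).IsNoncrossing := by
  intro X hX Y hY hXY hcross
  simp only [mem_coe, parts_inf, mem_erase, mem_image, mem_product] at hX hY
  obtain ⟨-, ⟨B, C⟩, ⟨hB, hC⟩, rfl⟩ := hX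
  obtain ⟨-, ⟨B', C'⟩, ⟨hB', hC'⟩, rfl⟩ := hY
  have hBB' : B = B' := by
    by_contra h
    exact hP hB hB' h (hcross.mono inter_subset_left inter_subset_left)
  have hCC' : C = C' := by
    by_contra h
    exact hQ hC hC' h (hcross.mono inter_subset_right inter_subset_right)
  exact hXY (by simp [hBB', hCC'])

lemma bind {Q : ∀ W ∈ P.parts, Finpartition W} (hP : P.IsNoncrossing)
    (hQ : ∀ W hW, (Q W hW).IsNoncrossing) : (P.bind Q).IsNoncrossing := by
  intro X hX Y hY hXY hcross
  obtain ⟨V, hV, hXV⟩ := mem_bind.1 hX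
  obtain ⟨V', hV', hYV'⟩ := mem_bind.1 hY
  obtain rfl | hVV' := eq_or_ne V V'
  · exact hQ V hV hXV hYV' hXY hcross
  · exact hP hV hV' hVV' (hcross.mono ((Q V hV).le hXV) ((Q V' hV').le hYV'))

lemma cutBlock (hP : P.IsNoncrossing) (W : Finset α) {I : Set α} (hI : I.OrdConnected) :
    (P.cutBlock W I).IsNoncrossing :=
  hP.bind fun V _ => by
    split_ifs
    exacts [isNoncrossing_cut hI, isNoncrossing_top]

lemma restrict_of_le {σ : Finpartition s} (hP : P.IsNoncrossing) (hPσ : P ≤ σ) {W : Finset α}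
    (hW : W ∈ σ.parts) : (P.restrict (σ.le hW)).IsNoncrossing :=
  hP.mono fun _ hB => ((mem_restrict_parts_of_le hPσ hW).1 hB).1

/-- A part whose convex hull, within `s`, contains as few points as possible has no other
part inside its hull (it would have a smaller hull) nor interleaved with it (noncrossing). -/
lemma exists_part_eq_inter_ordConnected (hP : P.IsNoncrossing) (hs : s.Nonempty) :
    ∃ X ∈ P.parts, ∃ I : Set α, I.OrdConnected ∧ (X : Set α) = ↑s ∩ I := by
  let hull (X : Finset α) : Set α := {x | ∃ y ∈ X, ∃ z ∈ X, y ≤ x ∧ x ≤ z}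
  have hull_ordConnected (X : Finset α) : (hull X).OrdConnected :=
    ⟨fun _ ⟨y, hy, _, _, hyx, _⟩ _ ⟨_, _, z, hz, _, hxz⟩ _ hx =>
      ⟨y, hy, z, hz, hyx.trans hx.1, hx.2.trans hxz⟩⟩
  obtain ⟨X, hX, hmin⟩ := P.parts.exists_min_image (fun X => #(s.filter (· ∈ hull X)))
    (P.parts_nonempty hs.ne_empty)
  refine ⟨X, hX, hull X, hull_ordConnected X, Set.Subset.antisymm
    (fun x hx => ⟨P.le hX hx, x, hx, x, hx, le_rfl, le_rfl⟩) ?_⟩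
  rintro x ⟨hxs, y, hy, z, hz, hyx, hxz⟩
  by_contra hxX
  obtain ⟨C, hC, hxC⟩ := P.exists_mem hxs
  have hCX : C ≠ X := by rintro rfl; exact hxX hxC
  have hyx : y < x := hyx.lt_of_ne (by rintro rfl; exact hxX hy)
  have hxz : x < z := hxz.lt_of_ne (by rintro rfl; exact hxX hz)
  by_cases hChull : ∀ k ∈ C, k ∈ hull X
  · have hXne := P.nonempty_of_mem_parts hX
    have hmX : X.min' hXne ∉ hull C := by
      rintro ⟨c, hc, -, -, hcm, -⟩
      obtain ⟨y', hy', -, -, hy'c, -⟩ := hChull c hc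
      have hcX : c ∈ X :=
        (le_antisymm hcm ((X.min'_le y' hy').trans hy'c)).symm ▸ X.min'_mem hXne
      exact disjoint_left.1 (P.disjoint hC hX hCX) hc hcX
    have hhull : s.filter (· ∈ hull C) ⊂ s.filter (· ∈ hull X) := by
      refine (ssubset_iff_of_subset fun w hw => ?_).2 ⟨X.min' hXne,
        mem_filter.2 ⟨P.le hX (X.min'_mem hXne), ?_⟩, fun h => hmX (mem_filter.1 h).2⟩
      · obtain ⟨hws, c₁, hc₁, c₂, hc₂, h₁, h₂⟩ := mem_filter.1 hw
        obtain ⟨y₁, hy₁, -, -, h₃, -⟩ := hChull c₁ hc₁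
        obtain ⟨-, -, z₂, hz₂, -, h₄⟩ := hChull c₂ hc₂
        exact mem_filter.2 ⟨hws, y₁, hy₁, z₂, hz₂, h₃.trans h₁, h₂.trans h₄⟩
      · exact ⟨_, X.min'_mem hXne, _, X.min'_mem hXne, le_rfl, le_rfl⟩
    exact (card_lt_card hhull).not_ge (hmin C hC)
  · push Not at hChull
    obtain ⟨k, hkC, hk⟩ := hChull
    rcases lt_or_gt_of_ne (show k ≠ x by rintro rfl; exact hk ⟨y, hy, z, hz, hyx.le, hxz.le⟩)
      with hkx | hxk
    · have hky : k < y := lt_of_not_ge fun hyk => hk ⟨y, hy, z, hz, hyk, hkx.le.trans hxz.le⟩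
      exact hP hC hX hCX ⟨k, y, x, z, hky, hyx, hxz, hkC, hxC, hy, hz⟩
    · have hzk : z < k := lt_of_not_ge fun hkz => hk ⟨y, hy, z, hz, hyx.le.trans hxk.le, hkz⟩
      exact hP hX hC hCX.symm ⟨y, x, z, k, hyx, hxz, hzk, hy, hz, hxC, hkC⟩

end IsNoncrossing

noncomputable def ncClosure (P : Finpartition s) : Finpartition s :=
  (univ.filter fun σ : Finpartition s => σ.IsNoncrossing ∧ P ≤ σ).inf id

variable {P σ : Finpartition s}

lemma le_ncClosure : P ≤ P.ncClosure :=
  Finset.le_inf fun _ hσ => (mem_filter.1 hσ).2.2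

lemma ncClosure_le (hσ : σ.IsNoncrossing) (hPσ : P ≤ σ) : P.ncClosure ≤ σ :=
  Finset.inf_le (mem_filter.2 ⟨mem_univ _, hσ, hPσ⟩)

lemma isNoncrossing_ncClosure : P.ncClosure.IsNoncrossing :=
  Finset.inf_induction isNoncrossing_top (fun _ h₁ _ h₂ => h₁.inf h₂)
    fun _ hσ => (mem_filter.1 hσ).2.1

/-- Otherwise cutting one block along a witnessing convex set would give a strictly finer
noncrossing partition still coarser than `P`. -/
lemma isConnected_restrict_ncClosure {W : Finset α} (hW : W ∈ P.ncClosure.parts) :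
    (P.restrict (P.ncClosure.le hW)).IsConnected := by
  intro I hI hresp
  by_contra! hcut
  obtain ⟨x, hxW, hxI⟩ := Set.not_disjoint_iff.1 hcut.2
  have hx : x ∈ W.filter (· ∈ I) := mem_filter.2 ⟨hxW, hxI⟩
  have hcutBlock : P.ncClosure.cutBlock W I = P.ncClosure :=
    le_antisymm (bind_le _ _) (ncClosure_le (isNoncrossing_ncClosure.cutBlock W hI)
      (le_cutBlock le_ncClosure hW hresp))
  have hWI := mem_cutBlock_parts hW ⟨x, hx⟩
  rw [hcutBlock] at hWI
  have hWI_eq : W.filter (· ∈ I) = W := P.ncClosure.eq_of_mem_parts hWI hW hx hxW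
  exact hcut.1 fun y hy => (mem_filter.1 (hWI_eq.symm ▸ hy : y ∈ W.filter (· ∈ I))).2

/-- If `W ∈ σ` were not a block of `ρ`, an interval block `X = W ∩ I` of the noncrossing
partition that `ρ` induces on `W` would be a proper union of blocks of `P` inside `W`. -/
lemma eq_of_le_of_isConnected_restrict {ρ : Finpartition s} (hρ : ρ.IsNoncrossing)
    (hPρ : P ≤ ρ) (hρσ : ρ ≤ σ) (hσ : ∀ W (hW : W ∈ σ.parts), (P.restrict (σ.le hW)).IsConnected) :
    ρ = σ := by
  refine le_antisymm hρσ fun W hW => ⟨W, ?_, le_rfl⟩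
  by_contra hWρ
  obtain ⟨X, hX, I, hI, hXI⟩ := (hρ.restrict_of_le hρσ hW).exists_part_eq_inter_ordConnected
    (σ.nonempty_of_mem_parts hW)
  rw [mem_restrict_parts_of_le hρσ hW] at hX
  have hresp :
      ∀ B ∈ (P.restrict (σ.le hW)).parts, ↑B ⊆ I ∨ Disjoint (↑B : Set α) I := by
    intro B hB
    rw [mem_restrict_parts_of_le (hPρ.trans hρσ) hW] at hB
    obtain ⟨Y, hY, hBY⟩ := hPρ hB.1
    obtain rfl | hYX := eq_or_ne Y X
    · exact Or.inl fun y hy => (hXI.le (hBY hy)).2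
    · refine Or.inr (Set.disjoint_left.2 fun y hy hyI => ?_)
      have hyX : y ∈ (X : Set α) := hXI.ge ⟨hB.2 hy, hyI⟩
      exact disjoint_left.1 (ρ.disjoint hY hX.1 hYX) (hBY hy) hyX
  rcases hσ W hW I hI hresp with hsub | hdisj
  · have hXW : X = W := by
      apply coe_injective
      rw [hXI, Set.inter_eq_left.2 hsub]
    exact hWρ (hXW ▸ hX.1)
  · obtain ⟨x, hx⟩ := ρ.nonempty_of_mem_parts hX.1
    exact Set.disjoint_left.1 hdisj (hXI.le hx).1 (hXI.le hx).2

theorem ncClosure_eq_iff :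
    P.ncClosure = σ ↔ σ.IsNoncrossing ∧ P ≤ σ ∧
      ∀ W (hW : W ∈ σ.parts), (P.restrict (σ.le hW)).IsConnected := by
  refine ⟨?_, fun ⟨hσ, hPσ, hconn⟩ => eq_of_le_of_isConnected_restrict
    isNoncrossing_ncClosure le_ncClosure (ncClosure_le hσ hPσ) hconn⟩
  rintro rfl
  exact ⟨isNoncrossing_ncClosure, le_ncClosure, fun _ => isConnected_restrict_ncClosure⟩

section Sums

variable {R : Type*} [CommSemiring R]

noncomputable def connectedSum (c : ℕ → R) (s : Finset α) : R :=
  ∑ P : Finpartition s with P.IsConnected, ∏ B ∈ P.parts, c #B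

noncomputable def noncrossingSum (f : Finset α → R) (s : Finset α) : R :=
  ∑ σ : Finpartition s with σ.IsNoncrossing, ∏ W ∈ σ.parts, f W

theorem sum_ncClosure_eq_prod_connectedSum (hσ : σ.IsNoncrossing) (c : ℕ → R) :
    ∑ P : Finpartition s with P.ncClosure = σ, ∏ B ∈ P.parts, c #B =
      ∏ W ∈ σ.parts, connectedSum c W := by
  simp only [connectedSum]
  rw [prod_sum]
  symm
  refine sum_nbij' (fun Q => σ.bind Q) (fun P W hW => P.restrict (σ.le hW)) ?_ ?_ ?_ ?_ ?_
  · intro Q hQ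
    refine mem_filter.2 ⟨mem_univ _, ncClosure_eq_iff.2 ⟨hσ, bind_le σ Q, fun W hW => ?_⟩⟩
    rw [restrict_bind]
    exact (mem_filter.1 (mem_pi.1 hQ W hW)).2
  · intro P hP
    exact mem_pi.2 fun W hW => mem_filter.2
      ⟨mem_univ _, (ncClosure_eq_iff.1 (mem_filter.1 hP).2).2.2 W hW⟩
  · exact fun Q _ => funext₂ fun W hW => restrict_bind σ Q hW
  · exact fun P hP => bind_restrict_of_le (ncClosure_eq_iff.1 (mem_filter.1 hP).2).2.1
  · exact fun Q _ => (prod_bind_parts σ Q _).symm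

theorem sum_eq_noncrossingSum_connectedSum (c : ℕ → R) (s : Finset α) :
    ∑ P : Finpartition s, ∏ B ∈ P.parts, c #B = noncrossingSum (connectedSum c) s := by
  rw [noncrossingSum, ← sum_fiberwise_of_maps_to (g := ncClosure) (t := univ.filter IsNoncrossing)
    fun _ _ => mem_filter.2 ⟨mem_univ _, isNoncrossing_ncClosure⟩]
  exact sum_congr rfl fun σ hσ => sum_ncClosure_eq_prod_connectedSum (mem_filter.1 hσ).2 c

section OrderEmbedding

variable {β : Type*} [LinearOrder β] (f : α ↪o β)

lemma isConnected_finsetMap_iff {P : Finpartition s} :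
    (P.finsetMap f.toEmbedding).IsConnected ↔ P.IsConnected := by
  have hresp (B : Finset α) (J : Set β) :
      (↑(B.map f.toEmbedding) ⊆ J ∨ Disjoint (↑(B.map f.toEmbedding) : Set β) J) ↔
        (↑B ⊆ f ⁻¹' J ∨ Disjoint (↑B : Set α) (f ⁻¹' J)) := by
    rw [coe_map, Set.image_subset_iff, Set.disjoint_image_left]
    rfl
  simp only [IsConnected, finsetMap_parts, forall_mem_map, Function.Embedding.coeFn_mk, hresp]
  refine ⟨fun h I hI => ?_, fun h J hJ => h _ (hJ.preimage_mono f.monotone)⟩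
  obtain ⟨J, hJ, rfl⟩ := hI.exists_ordConnected_preimage_eq f
  exact h J hJ

lemma connectedSum_map (c : ℕ → R) (s : Finset α) :
    connectedSum c (s.map f.toEmbedding) = connectedSum c s := by
  symm
  refine sum_nbij (finsetMap f.toEmbedding) (fun P hP => ?_)
    (finsetMap_injective _).injOn (fun Q hQ => ?_) (fun P _ => ?_)
  · exact mem_filter.2 ⟨mem_univ _, (isConnected_finsetMap_iff f).2 (mem_filter.1 hP).2⟩
  · obtain ⟨P, rfl⟩ := finsetMap_surjective _ Q
    exact ⟨P, mem_filter.2 ⟨mem_univ _, (isConnected_finsetMap_iff f).1 (mem_filter.1 hQ).2⟩,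
      rfl⟩
  · rw [finsetMap_parts, prod_map]
    simp only [Function.Embedding.coeFn_mk, card_map]

end OrderEmbedding

lemma connectedSum_eq_connectedSum_univ_fin (c : ℕ → R) (W : Finset α) :
    connectedSum c W = connectedSum c (univ : Finset (Fin #W)) := by
  conv_lhs => rw [← map_orderEmbOfFin_univ W rfl]
  exact connectedSum_map _ c _

end Sums

theorem eq_of_noncrossingSum_eq {R : Type*} [CommRing R] {κ κ' : ℕ → R}
    (h : ∀ n, 1 ≤ n → noncrossingSum (fun W => κ #W) (univ : Finset (Fin n)) =
      noncrossingSum (fun W => κ' #W) (univ : Finset (Fin n))) :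
    ∀ n, 1 ≤ n → κ n = κ' n := by
  intro n
  induction n using Nat.strong_induction_on with
  | _ n ih =>
  intro hn
  let NC : Finset (Finpartition (univ : Finset (Fin n))) := univ.filter IsNoncrossing
  have htop : ⊤ ∈ NC := mem_filter.2 ⟨mem_univ _, isNoncrossing_top⟩
  have hrest : ∀ σ ∈ NC.erase ⊤, ∏ W ∈ σ.parts, κ #W = ∏ W ∈ σ.parts, κ' #W := by
    intro σ hσ
    refine prod_congr rfl fun W hW => ih _ ?_ (card_pos.2 (σ.nonempty_of_mem_parts hW))
    have hW_ssubset : W ⊂ univ :=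
      ssubset_univ_iff.2 fun hWu => (mem_erase.1 hσ).1 (eq_top_of_mem_parts (hWu ▸ hW))
    simpa using card_lt_card hW_ssubset
  have hn' := h n hn
  simp only [noncrossingSum] at hn'
  rw [← add_sum_erase _ _ htop, ← add_sum_erase _ _ htop, sum_congr rfl hrest,
    parts_top_of_nonempty (univ_nonempty_iff.2 ⟨⟨0, hn⟩⟩), prod_singleton, prod_singleton,
    card_univ, Fintype.card_fin] at hn'
  exact add_right_cancel hn'

end Finpartition

section Fin

open scoped Classical

variable {n : ℕ}

lemma isPartitionOf_iff_exists_finpartition {P : Finset (Finset (Fin n))} :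
    IsPartitionOf P ↔ ∃ Q : Finpartition (univ : Finset (Fin n)), Q.parts = P := by
  refine ⟨fun h => ⟨Finpartition.ofExistsUnique P (fun _ _ => subset_univ _)
    (fun i _ => h.2 i) fun h0 => not_nonempty_empty (h.1 _ h0), rfl⟩, ?_⟩
  rintro ⟨Q, rfl⟩
  exact ⟨fun _ hB => Q.nonempty_of_mem_parts hB, fun i => Q.existsUnique_mem (mem_univ i)⟩

lemma finsum_isPartitionOf_and {M : Type*} [AddCommMonoid M] (p : Finset (Finset (Fin n)) → Prop)
    (g : Finset (Finset (Fin n)) → M) :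
    ∑ᶠ P ∈ {P | IsPartitionOf P ∧ p P}, g P =
      ∑ Q : Finpartition (univ : Finset (Fin n)) with p Q.parts, g Q.parts := by
  let S : Finset (Finpartition (univ : Finset (Fin n))) := univ.filter fun Q => p Q.parts
  have hset : {P | IsPartitionOf P ∧ p P} = ↑(S.image fun Q => Q.parts) := by
    ext P
    simp only [S, Set.mem_ofPred_eq, isPartitionOf_iff_exists_finpartition, coe_image,
      coe_filter, mem_univ, true_and, Set.mem_image]
    constructor
    · rintro ⟨⟨Q, rfl⟩, hP⟩
      exact ⟨Q, hP, rfl⟩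
    · rintro ⟨Q, hQ, rfl⟩
      exact ⟨⟨Q, rfl⟩, hQ⟩
  rw [hset, finsum_mem_coe_finset, sum_image fun _ _ _ _ h => Finpartition.ext h]

lemma finsum_isPartitionOf {M : Type*} [AddCommMonoid M] (g : Finset (Finset (Fin n)) → M) :
    ∑ᶠ P ∈ {P | IsPartitionOf P}, g P =
      ∑ Q : Finpartition (univ : Finset (Fin n)), g Q.parts := by
  simpa using finsum_isPartitionOf_and (fun _ => True) g

lemma isConnectedPartition_parts_iff {Q : Finpartition (univ : Finset (Fin n))} :
    IsConnectedPartition Q.parts ↔ Q.IsConnected := by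
  constructor
  · intro h I hI hresp
    let J := univ.filter (· ∈ I)
    have hmemJ {y : Fin n} : y ∈ J ↔ y ∈ I := by simp [J]
    obtain hJ | hJ := J.eq_empty_or_nonempty
    · exact Or.inr (Set.disjoint_left.2 fun x _ hxI => (eq_empty_iff_forall_notMem.1 hJ) x
        (hmemJ.2 hxI))
    have hJIcc : J = Icc (J.min' hJ) (J.max' hJ) := by
      ext x
      rw [mem_Icc, hmemJ]
      refine ⟨fun hx => ⟨J.min'_le x (hmemJ.2 hx), J.le_max' x (hmemJ.2 hx)⟩, fun hx => ?_⟩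
      exact hI.out (hmemJ.1 (J.min'_mem hJ)) (hmemJ.1 (J.max'_mem hJ)) hx
    have hrespJ : ∀ B ∈ Q.parts, B ⊆ J ∨ Disjoint B J := fun B hB =>
      (hresp B hB).imp (fun h x hx => hmemJ.2 (h hx))
        fun h => disjoint_left.2 fun x hx hxJ => Set.disjoint_left.1 h hx (hmemJ.1 hxJ)
    rcases h J ⟨_, _, hJIcc⟩ hrespJ with h0 | hu
    · exact absurd h0 hJ.ne_empty
    · exact Or.inl fun x _ => hmemJ.1 (hu ▸ mem_univ x)
  · rintro h _ ⟨a, b, rfl⟩ hresp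
    have hresp' :
        ∀ B ∈ Q.parts, ↑B ⊆ Set.Icc a b ∨ Disjoint (↑B : Set (Fin n)) (Set.Icc a b) := by
      intro B hB
      rw [← coe_Icc]
      exact (hresp B hB).imp coe_subset.2 disjoint_coe.2
    rcases h _ Set.ordConnected_Icc hresp' with hsub | hdisj
    · exact Or.inr (eq_univ_of_forall fun x => by simpa using hsub (mem_univ x))
    · exact Or.inl (eq_empty_of_forall_notMem fun x hx =>
        Set.disjoint_left.1 hdisj (mem_univ x) (by simpa using hx))

lemma finsum_isPartitionOf_and_isNoncrossing {R : Type*} [CommSemiring R] (κ : ℕ → R) :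
    ∑ᶠ P ∈ {P : Finset (Finset (Fin n)) | IsPartitionOf P ∧ IsNoncrossing P},
      ∏ B ∈ P, κ #B = Finpartition.noncrossingSum (fun W => κ #W) (univ : Finset (Fin n)) := by
  rw [finsum_isPartitionOf_and]
  rfl

lemma finsum_isPartitionOf_and_isConnectedPartition {R : Type*} [CommSemiring R] (c : ℕ → R) :
    ∑ᶠ P ∈ {P : Finset (Finset (Fin n)) | IsPartitionOf P ∧ IsConnectedPartition P},
      ∏ B ∈ P, c #B = Finpartition.connectedSum c (univ : Finset (Fin n)) := by
  rw [finsum_isPartitionOf_and, Finpartition.connectedSum]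
  exact sum_congr (filter_congr fun _ _ => isConnectedPartition_parts_iff) fun _ _ => rfl

end Fin

/-- If a sequence of moments `m_n` has classical cumulants `c_n` (moment–cumulant relation
over all partitions) and free cumulants `κ_n` (moment–cumulant relation over noncrossing
partitions), then `κ_n = Σ_{π connected partition of [n]} Π_{V ∈ π} c_{|V|}`. -/
theorem free_cumulants_eq_sum_connected_classical (m c κ : ℕ → ℝ)
    (hc : ∀ n : ℕ, 1 ≤ n →
      m n = ∑ᶠ π ∈ {P : Finset (Finset (Fin n)) | IsPartitionOf P},
        ∏ B ∈ π, c B.card)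
    (hκ : ∀ n : ℕ, 1 ≤ n →
      m n = ∑ᶠ π ∈ {P : Finset (Finset (Fin n)) | IsPartitionOf P ∧ IsNoncrossing P},
        ∏ B ∈ π, κ B.card) :
    ∀ n : ℕ, 1 ≤ n →
      κ n = ∑ᶠ π ∈ {P : Finset (Finset (Fin n)) |
          IsPartitionOf P ∧ IsConnectedPartition P},
        ∏ B ∈ π, c B.card := by
  have hmoments (n : ℕ) (hn : 1 ≤ n) :
      Finpartition.noncrossingSum (fun W => κ #W) (univ : Finset (Fin n)) =
        Finpartition.noncrossingSum (fun W => Finpartition.connectedSum c (univ : Finset (Fin #W)))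
          (univ : Finset (Fin n)) := by
    simp_rw [← Finpartition.connectedSum_eq_connectedSum_univ_fin,
      ← Finpartition.sum_eq_noncrossingSum_connectedSum]
    rw [← finsum_isPartitionOf fun P => ∏ B ∈ P, c #B, ← hc n hn, hκ n hn,
      finsum_isPartitionOf_and_isNoncrossing]
  intro n hn
  rw [Finpartition.eq_of_noncrossingSum_eq
      (κ' := fun k => Finpartition.connectedSum c (univ : Finset (Fin k))) hmoments n hn,
    finsum_isPartitionOf_and_isConnectedPartition]
end

section
/- Let c ∈ (−1,0) and f : ℝ → ℝ be real analytic satisfying f'(r) = f(r)² − rf(r) − c and f(r) > r for all r. Then f'(r) < 1 for all r ∈ ℝ. -/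
open Filter Set

/-! Put `y = f' - 1`. Differentiating the Riccati equation gives the linear equation
`y' = (2f - r) y + (f - r)` with positive forcing `f - r`, so once `y(r₀) ≥ 0` the function `y`
stays positive after `r₀`. Then `f - r` increases (its derivative is `y`), and for large `r`
the equation gives `y' ≥ f - r ≥ δ > 0`, so `y → ∞`, contradicting `f' → 1`. -/

theorem pos_of_hasDerivAt_mul_add {y a b : ℝ → ℝ} (ha : Continuous a)
    (hy : ∀ r, HasDerivAt y (a r * y r + b r) r) (hb : ∀ r, 0 < b r) {r₀ r : ℝ}
    (hr₀ : 0 ≤ y r₀) (hr : r₀ < r) : 0 < y r := by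
  set A : ℝ → ℝ := fun r => ∫ t in (0 : ℝ)..r, a t
  have hA : ∀ r, HasDerivAt A (a r) r := fun r =>
    (ha.integral_hasStrictDerivAt 0 r).hasDerivAt
  -- the integrating factor `exp (-A)` turns the equation into `(y e^{-A})' = b e^{-A} > 0`
  have hw : ∀ r, HasDerivAt (fun r => y r * Real.exp (-A r)) (b r * Real.exp (-A r)) r := by
    intro r
    refine ((hy r).mul ((hA r).neg.exp)).congr_deriv ?_
    simp only [Pi.neg_apply]
    ring
  have hmono := strictMono_of_hasDerivAt_pos hw fun r => mul_pos (hb r) (Real.exp_pos _)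
  have hwr : 0 < y r * Real.exp (-A r) :=
    (mul_nonneg hr₀ (Real.exp_pos _).le).trans_lt (hmono hr)
  exact pos_of_mul_pos_left hwr (Real.exp_pos _).le

theorem tendsto_atTop_of_le_hasDerivAt {y y' : ℝ → ℝ} {a δ : ℝ} (hδ : 0 < δ)
    (hy : ∀ r ≥ a, HasDerivAt y (y' r) r) (hy' : ∀ r ≥ a, δ ≤ y' r) :
    Tendsto y atTop atTop := by
  have hgrowth : ∀ r ≥ a, δ * (r - a) ≤ y r - y a := by
    intro r hr
    refine (convex_Ici a).mul_sub_le_image_sub_of_le_deriv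
      (fun x hx => (hy x hx).continuousAt.continuousWithinAt)
      (fun x hx => (hy x (interior_subset hx)).differentiableAt.differentiableWithinAt)
      (fun x hx => ?_) a self_mem_Ici r hr hr
    rw [(hy x (interior_subset hx)).deriv]
    exact hy' x (interior_subset hx)
  refine tendsto_atTop_mono' atTop
    ((eventually_ge_atTop a).mono fun r hr => (?_ : δ * r + (y a - δ * a) ≤ y r)) ?_
  · linarith [hgrowth r hr]
  · exact tendsto_atTop_add_const_right _ _ (tendsto_id.const_mul_atTop hδ)

section Riccati

variable {f : ℝ → ℝ} {c : ℝ}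

theorem hasDerivAt_riccati_deriv_sub_one (hf : ∀ r, HasDerivAt f (f r ^ 2 - r * f r - c) r)
    (r : ℝ) :
    HasDerivAt (fun r => f r ^ 2 - r * f r - c - 1)
      ((2 * f r - r) * (f r ^ 2 - r * f r - c - 1) + (f r - r)) r := by
  refine ((((hf r).pow 2).sub ((hasDerivAt_id r).mul (hf r))).sub_const c |>.sub_const 1)
    |>.congr_deriv ?_
  simp only [id, Nat.cast_ofNat]
  ring

theorem riccati_tendsto_atTop_of_one_le_deriv (hf : ∀ r, HasDerivAt f (f r ^ 2 - r * f r - c) r)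
    (hgt : ∀ r, r < f r) {r₀ : ℝ} (hr₀ : 1 ≤ f r₀ ^ 2 - r₀ * f r₀ - c) :
    Tendsto (fun r => f r ^ 2 - r * f r - c) atTop atTop := by
  set y : ℝ → ℝ := fun r => f r ^ 2 - r * f r - c - 1
  have hcont : Continuous f := continuous_iff_continuousAt.2 fun r => (hf r).continuousAt
  have hpos : ∀ r, r₀ < r → 0 < y r :=
    fun r => pos_of_hasDerivAt_mul_add (by fun_prop) (hasDerivAt_riccati_deriv_sub_one hf)
      (fun r => sub_pos.2 (hgt r)) (sub_nonneg.2 hr₀)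
  set r₁ := max r₀ 0 + 1
  obtain ⟨hr₀r₁, hr₁⟩ : r₀ < r₁ ∧ 0 < r₁ := by
    constructor <;> linarith [le_max_left r₀ 0, le_max_right r₀ 0]
  have hgap : MonotoneOn (fun r => f r - r) (Ici r₁) :=
    monotoneOn_of_hasDerivWithinAt_nonneg (convex_Ici r₁) (by fun_prop)
      (fun r _ => ((hf r).sub (hasDerivAt_id r)).hasDerivWithinAt)
      (fun r hr => (hpos r (hr₀r₁.trans (by simpa using hr))).le)
  have hy' : ∀ r ≥ r₁, f r₁ - r₁ ≤ (2 * f r - r) * y r + (f r - r) := by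
    intro r hr
    have hprod : 0 ≤ (2 * f r - r) * y r :=
      mul_nonneg (by linarith [hgt r]) (hpos r (by linarith)).le
    linarith [hgap self_mem_Ici (mem_Ici.2 hr) hr]
  have hy := tendsto_atTop_of_le_hasDerivAt (sub_pos.2 (hgt r₁))
    (fun r _ => hasDerivAt_riccati_deriv_sub_one hf r) hy'
  exact (tendsto_atTop_add_const_right _ 1 hy).congr fun r => by ring

end Riccati

theorem f_deriv_lt_one_general (c : ℝ) (f : ℝ → ℝ)
    (hf : ∀ r : ℝ, HasDerivAt f (f r ^ 2 - r * f r - c) r)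
    (hgt : ∀ r : ℝ, r < f r)
    (hlim : Tendsto (fun r : ℝ => f r ^ 2 - r * f r - c) atTop (nhds 1)) :
    ∀ r : ℝ, f r ^ 2 - r * f r - c < 1 := by
  intro r₀
  by_contra! hr₀
  exact not_tendsto_nhds_of_tendsto_atTop
    (riccati_tendsto_atTop_of_one_le_deriv hf hgt hr₀) 1 hlim

/-- Let `c ∈ (−1,0)` and `f : ℝ → ℝ` be a (real-analytic) solution of
`f'(r) = f(r)² − rf(r) − c` with `f(r) > r` for all `r` and `f'(r) → 1` as `r → +∞`.
Then `f'(r) < 1` for all `r ∈ ℝ`. -/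
theorem f_deriv_lt_one (c : ℝ) (hc1 : -1 < c) (hc2 : c < 0) (f : ℝ → ℝ)
    (hf : ∀ r : ℝ, HasDerivAt f (f r ^ 2 - r * f r - c) r)
    (hgt : ∀ r : ℝ, r < f r)
    (hlim : Tendsto (fun r : ℝ => f r ^ 2 - r * f r - c) atTop (nhds 1)) :
    ∀ r : ℝ, f r ^ 2 - r * f r - c < 1 :=
  f_deriv_lt_one_general c f hf hgt hlim
end

section
/- For c ∈ (−1, 0], the Askey-Wimp-Kerov distribution μ_{c+1}, suitably dilated, decomposes as a free additive convolution ν_c ⊞ S of the standard semicircle law S with some probability measure ν_c on ℝ. -/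
open MeasureTheory

/-- The Cauchy transform of a measure on `ℝ`. -/
noncomputable def cauchyTransform (μ : Measure ℝ) (z : ℂ) : ℂ :=
  ∫ t : ℝ, (z - (t : ℂ))⁻¹ ∂μ

/-- The reciprocal Cauchy transform `F_μ = 1/G_μ`. -/
noncomputable def recipCauchy (μ : Measure ℝ) (z : ℂ) : ℂ :=
  (cauchyTransform μ z)⁻¹

/-- Dilation of a measure on `ℝ` by a factor `r`. -/
noncomputable def dilate (r : ℝ) (μ : Measure ℝ) : Measure ℝ :=
  μ.map (fun x : ℝ => r * x)

/-- `μ` is infinitely divisible w.r.t. the binary convolution operation `conv`. -/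
def FreelyInfDivisible (conv : Measure ℝ → Measure ℝ → Measure ℝ) (μ : Measure ℝ) :
    Prop :=
  ∀ n : ℕ, 1 ≤ n → ∃ ν : Measure ℝ, IsProbabilityMeasure ν ∧
    (fun ρ => conv ν ρ)^[n - 1] ν = μ

/-!
Belinschi–Nica, applied to the freely infinitely divisible `λ = D_{1/√(c+1)} μ_c`, gives
`F_λ = z - G_{ν ⊞ S}`; rescaling the continued-fraction relation turns this into
`G_{ν ⊞ S} = G_{D_{1/√(c+1)} μ_{c+1}}` on the upper half-plane. It remains to see that a measure is
determined by its Cauchy transform there. Since `-Im G_μ(x + iy)` is the Poisson integral of `μ`,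
the total mass is `lim_{y → ∞} y · ∫ P_y(0, t) dμ(t)`, and integrating the Poisson kernel in `x`
over `(-∞, a + δ)` at height `δ²` gives `∫ (arctan ((a + δ - t) / δ²) + π / 2) dμ(t)`, which tends
to `π μ (-∞, a]` as `δ → 0⁺`.
-/

open Filter Set Real Topology
open scoped ENNReal

/-- The Poisson kernel of the upper half-plane at `x + y * I`, as a function of the boundary
point `t`. -/
noncomputable def halfPlanePoissonKernel (x y t : ℝ) : ℝ :=
  y / ((x - t) ^ 2 + y ^ 2)

lemma halfPlanePoissonKernel_pos {y : ℝ} (hy : 0 < y) (x t : ℝ) :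
    0 < halfPlanePoissonKernel x y t := by
  unfold halfPlanePoissonKernel
  positivity

lemma continuous_halfPlanePoissonKernel {y : ℝ} (hy : 0 < y) :
    Continuous fun p : ℝ × ℝ => halfPlanePoissonKernel p.1 y p.2 :=
  continuous_const.div (by fun_prop) fun p => by positivity

lemma integrable_halfPlanePoissonKernel {y : ℝ} (hy : 0 < y) (t : ℝ) :
    Integrable fun x => halfPlanePoissonKernel x y t := by
  have h := ((integrable_inv_one_add_sq.comp_div hy.ne').comp_sub_right t).const_mul y⁻¹
  refine h.congr (Eventually.of_forall fun x => ?_)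
  simp only [halfPlanePoissonKernel]
  field_simp
  ring

lemma integral_Iio_halfPlanePoissonKernel {y : ℝ} (hy : 0 < y) (a t : ℝ) :
    ∫ x in Iio a, halfPlanePoissonKernel x y t = arctan ((a - t) / y) + π / 2 := by
  rw [setIntegral_congr_set Iio_ae_eq_Iic]
  have hderiv : ∀ x ∈ Iic a, HasDerivAt (fun x => arctan ((x - t) / y))
      (halfPlanePoissonKernel x y t) x := by
    intro x _
    refine (((hasDerivAt_id' x).sub_const t).div_const y).arctan.congr_deriv ?_
    simp only [halfPlanePoissonKernel]
    field_simp
    ring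
  have hlim : Tendsto (fun x => arctan ((x - t) / y)) atBot (𝓝 (-(π / 2))) :=
    tendsto_nhds_of_tendsto_nhdsWithin tendsto_arctan_atBot |>.comp
      ((tendsto_atBot_add_const_right _ (-t) tendsto_id).atBot_div_const hy)
  rw [integral_Iic_of_hasDerivAt_of_tendsto' hderiv
    (integrable_halfPlanePoissonKernel hy t).integrableOn hlim, sub_neg_eq_add]

lemma im_inv_sub_ofReal (z : ℂ) (t : ℝ) :
    ((z - t)⁻¹).im = -halfPlanePoissonKernel z.re z.im t := by
  simp only [Complex.inv_im, Complex.normSq_apply, Complex.sub_re, Complex.sub_im,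
    Complex.ofReal_re, Complex.ofReal_im, sub_zero, halfPlanePoissonKernel]
  ring

lemma continuous_inv_sub_ofReal {z : ℂ} (hz : z.im ≠ 0) :
    Continuous fun t : ℝ => (z - t)⁻¹ :=
  (continuous_const.sub Complex.continuous_ofReal).inv₀ fun t h => hz <| by
    simpa using congrArg Complex.im h

lemma integrable_inv_sub_ofReal (μ : Measure ℝ) [IsFiniteMeasure μ] {z : ℂ} (hz : z.im ≠ 0) :
    Integrable (fun t : ℝ => (z - t)⁻¹) μ := by
  refine Integrable.of_bound (continuous_inv_sub_ofReal hz).aestronglyMeasurable |z.im|⁻¹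
    (Eventually.of_forall fun t => ?_)
  rw [norm_inv]
  refine inv_anti₀ (abs_pos.mpr hz) ?_
  simpa using Complex.abs_im_le_norm (z - t)

lemma integrable_halfPlanePoissonKernel_of_integrable_inv_sub {μ : Measure ℝ} {z : ℂ}
    (h : Integrable (fun t : ℝ => (z - t)⁻¹) μ) :
    Integrable (halfPlanePoissonKernel z.re z.im) μ := by
  simpa only [RCLike.im_to_complex, im_inv_sub_ofReal, Pi.neg_def, neg_neg] using h.im.neg

lemma im_cauchyTransform {μ : Measure ℝ} {z : ℂ} (h : Integrable (fun t : ℝ => (z - t)⁻¹) μ) :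
    (cauchyTransform μ z).im = -∫ t, halfPlanePoissonKernel z.re z.im t ∂μ := by
  rw [cauchyTransform, ← RCLike.im_to_complex, ← integral_im h, ← integral_neg]
  simp only [RCLike.im_to_complex, im_inv_sub_ofReal]

lemma im_cauchyTransform_lt_zero (μ : Measure ℝ) [IsFiniteMeasure μ] [NeZero μ] {z : ℂ}
    (hz : 0 < z.im) : (cauchyTransform μ z).im < 0 := by
  have h := integrable_inv_sub_ofReal μ hz.ne'
  rw [im_cauchyTransform h, neg_lt_zero,
    integral_pos_iff_support_of_nonneg (fun t => (halfPlanePoissonKernel_pos hz z.re t).le)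
    (integrable_halfPlanePoissonKernel_of_integrable_inv_sub h),
    Function.support_eq_univ fun t => (halfPlanePoissonKernel_pos hz z.re t).ne']
  simpa using NeZero.ne μ

lemma lintegral_arctan_eq_setLIntegral_lintegral_halfPlanePoissonKernel (μ : Measure ℝ)
    [SFinite μ] {y : ℝ} (hy : 0 < y) (a : ℝ) :
    ∫⁻ t, ENNReal.ofReal (arctan ((a - t) / y) + π / 2) ∂μ
      = ∫⁻ x in Iio a, ∫⁻ t, ENNReal.ofReal (halfPlanePoissonKernel x y t) ∂μ := by
  calc _ = ∫⁻ t, (∫⁻ x in Iio a, ENNReal.ofReal (halfPlanePoissonKernel x y t)) ∂μ := by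
        refine lintegral_congr fun t => ?_
        rw [← integral_Iio_halfPlanePoissonKernel hy, ofReal_integral_eq_lintegral_ofReal
          (integrable_halfPlanePoissonKernel hy t).integrableOn
          (Eventually.of_forall fun x => (halfPlanePoissonKernel_pos hy x t).le)]
    _ = _ := (lintegral_lintegral_swap
          (continuous_halfPlanePoissonKernel hy).measurable.ennreal_ofReal.aemeasurable).symm

lemma tendsto_ofReal_arctan_add_atTop :
    Tendsto (fun u => ENNReal.ofReal (arctan u + π / 2)) atTop (𝓝 (ENNReal.ofReal π)) := by
  have h := (tendsto_nhds_of_tendsto_nhdsWithin tendsto_arctan_atTop).add_const (π / 2)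
  rw [add_halves] at h
  exact (ENNReal.continuous_ofReal.tendsto π).comp h

lemma tendsto_ofReal_arctan_add_atBot :
    Tendsto (fun u => ENNReal.ofReal (arctan u + π / 2)) atBot (𝓝 0) := by
  have h := (tendsto_nhds_of_tendsto_nhdsWithin tendsto_arctan_atBot).add_const (π / 2)
  rw [neg_add_cancel] at h
  have h' := (ENNReal.continuous_ofReal.tendsto 0).comp h
  rwa [ENNReal.ofReal_zero] at h'

/-- Shifting the cut-off by `δ` while the height is `δ ^ 2` makes the limit the indicator of
`Iic a`, instead of giving the atom at `a` only half its weight. -/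
lemma tendsto_ofReal_arctan_shift_indicator (a t : ℝ) :
    Tendsto (fun δ => ENNReal.ofReal (arctan ((a + δ - t) / δ ^ 2) + π / 2)) (𝓝[>] 0)
      (𝓝 ((Iic a).indicator (fun _ => ENNReal.ofReal π) t)) := by
  by_cases hta : t ≤ a
  · rw [indicator_of_mem (mem_Iic.2 hta)]
    refine tendsto_ofReal_arctan_add_atTop.comp (tendsto_atTop_mono' _ ?_ tendsto_inv_nhdsGT_zero)
    filter_upwards [self_mem_nhdsWithin] with δ (hδ : 0 < δ)
    rw [le_div_iff₀ (by positivity), pow_two, ← mul_assoc, inv_mul_cancel₀ hδ.ne', one_mul]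
    linarith
  · rw [indicator_of_notMem (notMem_Iic.2 (not_le.1 hta))]
    refine tendsto_ofReal_arctan_add_atBot.comp ?_
    have hnum : Tendsto (fun δ => a + δ - t) (𝓝[>] 0) (𝓝 (a - t)) := by
      have h : Continuous fun δ : ℝ => a + δ - t := by fun_prop
      simpa using (h.tendsto 0).mono_left nhdsWithin_le_nhds
    simpa [div_eq_mul_inv, inv_pow] using
      hnum.neg_mul_atTop (by linarith)
        ((tendsto_pow_atTop two_ne_zero).comp tendsto_inv_nhdsGT_zero)

lemma tendsto_lintegral_ofReal_arctan_shift (μ : Measure ℝ) [IsFiniteMeasure μ] (a : ℝ) :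
    Tendsto (fun δ => ∫⁻ t, ENNReal.ofReal (arctan ((a + δ - t) / δ ^ 2) + π / 2) ∂μ) (𝓝[>] 0)
      (𝓝 (ENNReal.ofReal π * μ (Iic a))) := by
  rw [← lintegral_indicator_const measurableSet_Iic]
  refine tendsto_lintegral_filter_of_dominated_convergence (fun _ => ENNReal.ofReal π)
    (Eventually.of_forall fun δ => by fun_prop)
    (Eventually.of_forall fun δ => Eventually.of_forall fun t =>
      ENNReal.ofReal_le_ofReal (by linarith [arctan_lt_pi_div_two ((a + δ - t) / δ ^ 2)]))
    (by simpa using ENNReal.mul_ne_top ENNReal.ofReal_ne_top (measure_ne_top μ univ))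
    (Eventually.of_forall (tendsto_ofReal_arctan_shift_indicator a))

lemma mul_halfPlanePoissonKernel_zero {y : ℝ} (hy : y ≠ 0) (t : ℝ) :
    y * halfPlanePoissonKernel 0 y t = (1 + t ^ 2 / y ^ 2)⁻¹ := by
  simp only [halfPlanePoissonKernel]
  field_simp
  ring

lemma tendsto_mul_lintegral_halfPlanePoissonKernel (μ : Measure ℝ) :
    Tendsto (fun n : ℕ => ENNReal.ofReal (n + 1) *
      ∫⁻ t, ENNReal.ofReal (halfPlanePoissonKernel 0 (n + 1) t) ∂μ) atTop (𝓝 (μ univ)) := by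
  have hrw : ∀ n : ℕ, ENNReal.ofReal (n + 1) *
      ∫⁻ t, ENNReal.ofReal (halfPlanePoissonKernel 0 (n + 1) t) ∂μ
        = ∫⁻ t, ENNReal.ofReal (1 + t ^ 2 / ((n : ℝ) + 1) ^ 2)⁻¹ ∂μ := by
    intro n
    rw [← lintegral_const_mul' _ _ ENNReal.ofReal_ne_top]
    simp_rw [← ENNReal.ofReal_mul (Nat.cast_add_one_pos n).le,
      mul_halfPlanePoissonKernel_zero (Nat.cast_add_one_ne_zero n)]
  simp_rw [hrw, ← lintegral_one]
  refine lintegral_tendsto_of_tendsto_of_monotone (fun n => by fun_prop)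
    (Eventually.of_forall fun t m n hmn => ?_) (Eventually.of_forall fun t => ?_)
  · exact ENNReal.ofReal_le_ofReal (by gcongr)
  · have h : Tendsto (fun n : ℕ => (1 + t ^ 2 / ((n : ℝ) + 1) ^ 2)⁻¹) atTop (𝓝 (1 + 0)⁻¹) :=
      ((tendsto_const_nhds.div_atTop ((tendsto_pow_atTop two_ne_zero).comp
        (tendsto_atTop_add_const_right _ 1 tendsto_natCast_atTop_atTop))).const_add 1).inv₀
        (by norm_num)
    rw [add_zero, inv_one] at h
    have h' := (ENNReal.continuous_ofReal.tendsto 1).comp h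
    rwa [ENNReal.ofReal_one] at h'

theorem eq_of_lintegral_halfPlanePoissonKernel_eq {η τ : Measure ℝ} [IsFiniteMeasure τ]
    (h : ∀ x y, 0 < y → ∫⁻ t, ENNReal.ofReal (halfPlanePoissonKernel x y t) ∂η
      = ∫⁻ t, ENNReal.ofReal (halfPlanePoissonKernel x y t) ∂τ) : η = τ := by
  have hmass : η univ = τ univ := by
    refine tendsto_nhds_unique ?_ (tendsto_mul_lintegral_halfPlanePoissonKernel τ)
    simpa only [h 0 _ (Nat.cast_add_one_pos _)] using tendsto_mul_lintegral_halfPlanePoissonKernel η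
  have : IsFiniteMeasure η := ⟨hmass ▸ measure_lt_top τ univ⟩
  have harctan : ∀ a y, 0 < y →
      ∫⁻ t, ENNReal.ofReal (arctan ((a - t) / y) + π / 2) ∂η
        = ∫⁻ t, ENNReal.ofReal (arctan ((a - t) / y) + π / 2) ∂τ := by
    intro a y hy
    simp only [lintegral_arctan_eq_setLIntegral_lintegral_halfPlanePoissonKernel _ hy, h _ _ hy]
  refine Measure.ext_of_Iic η τ fun a => ?_
  have hlim := (tendsto_lintegral_ofReal_arctan_shift η a).congr'
    (eventually_nhdsWithin_of_forall (s := Ioi 0) fun δ hδ =>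
      harctan (a + δ) (δ ^ 2) (pow_pos hδ 2))
  exact (ENNReal.mul_right_inj (ENNReal.ofReal_pos.2 pi_pos).ne' ENNReal.ofReal_ne_top).1 <|
    tendsto_nhds_unique hlim (tendsto_lintegral_ofReal_arctan_shift τ a)

theorem eq_of_cauchyTransform_eq {η τ : Measure ℝ} [IsFiniteMeasure τ] [NeZero τ]
    (h : ∀ z : ℂ, 0 < z.im → cauchyTransform η z = cauchyTransform τ z) : η = τ := by
  refine eq_of_lintegral_halfPlanePoissonKernel_eq fun x y hy => ?_
  let z : ℂ := ⟨x, y⟩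
  have hz : 0 < z.im := hy
  have hτ := integrable_inv_sub_ofReal τ hz.ne'
  -- otherwise `cauchyTransform η z` is the junk value `0`
  have hη : Integrable (fun t : ℝ => (z - t)⁻¹) η := by
    by_contra hη
    have hneg := im_cauchyTransform_lt_zero τ hz
    rw [← h z hz, cauchyTransform, integral_undef hη, Complex.zero_im] at hneg
    exact hneg.false
  have him := congrArg Complex.im (h z hz)
  rw [im_cauchyTransform hη, im_cauchyTransform hτ, neg_inj] at him
  have hnonneg : 0 ≤ halfPlanePoissonKernel x y := fun t => (halfPlanePoissonKernel_pos hy x t).le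
  rw [← ofReal_integral_eq_lintegral_ofReal
      (integrable_halfPlanePoissonKernel_of_integrable_inv_sub hη) (.of_forall hnonneg),
    ← ofReal_integral_eq_lintegral_ofReal
      (integrable_halfPlanePoissonKernel_of_integrable_inv_sub hτ) (.of_forall hnonneg)]
  exact congrArg ENNReal.ofReal him

instance (r : ℝ) (μ : Measure ℝ) [IsProbabilityMeasure μ] : IsProbabilityMeasure (dilate r μ) :=
  Measure.isProbabilityMeasure_map (measurable_const_mul r).aemeasurable

lemma cauchyTransform_dilate (μ : Measure ℝ) {r : ℝ} (hr : r ≠ 0) (z : ℂ) :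
    cauchyTransform (dilate r μ) z = (r : ℂ)⁻¹ * cauchyTransform μ (z / r) := by
  rw [cauchyTransform, dilate, integral_map (measurable_const_mul r).aemeasurable
    (by fun_prop), cauchyTransform, ← integral_const_mul]
  congr 1 with t
  have hrC : (r : ℂ) ≠ 0 := Complex.ofReal_ne_zero.2 hr
  rw [← mul_inv]
  congr 1
  push_cast
  field_simp

lemma recipCauchy_dilate (μ : Measure ℝ) {r : ℝ} (hr : r ≠ 0) (z : ℂ) :
    recipCauchy (dilate r μ) z = r * recipCauchy μ (z / r) := by
  rw [recipCauchy, cauchyTransform_dilate μ hr, mul_inv, inv_inv, recipCauchy]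

theorem awk_semicircle_decomposition_general
    (conv : Measure ℝ → Measure ℝ → Measure ℝ) (S : Measure ℝ)
    (c : ℝ) (hc1 : -1 < c)
    (μc μc1 : Measure ℝ) (hμc : IsProbabilityMeasure μc)
    (hμc1 : IsProbabilityMeasure μc1)
    -- the continued fraction relation between `μ_c` and `μ_{c+1}`:
    (hCF : ∀ z : ℂ, 0 < z.im →
      cauchyTransform μc1 z = (z - recipCauchy μc z) / ((c : ℂ) + 1))
    -- the variance-one dilation of `μ_c` has mean zero and variance one:
    (hmean : ∫ x : ℝ, x ∂(dilate (Real.sqrt (c + 1))⁻¹ μc) = 0)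
    (hvar : ∫ x : ℝ, x ^ 2 ∂(dilate (Real.sqrt (c + 1))⁻¹ μc) = 1)
    -- free infinite divisibility of the dilation of `μ_c` (given):
    (hFID : FreelyInfDivisible conv (dilate (Real.sqrt (c + 1))⁻¹ μc))
    -- Belinschi–Nica characterization (given):
    (hBN : ∀ lam : Measure ℝ, IsProbabilityMeasure lam →
      (∫ x : ℝ, x ∂lam) = 0 → (∫ x : ℝ, x ^ 2 ∂lam) = 1 →
      (FreelyInfDivisible conv lam ↔
        ∃ ν ρ : Measure ℝ, IsProbabilityMeasure ν ∧ IsProbabilityMeasure ρ ∧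
          (∀ z : ℂ, 0 < z.im → recipCauchy ρ z = z - cauchyTransform ν z) ∧
          (∀ z : ℂ, 0 < z.im →
            recipCauchy lam z = z - cauchyTransform (conv ν S) z))) :
    ∃ ν : Measure ℝ, IsProbabilityMeasure ν ∧
      dilate (Real.sqrt (c + 1))⁻¹ μc1 = conv ν S := by
  set r := Real.sqrt (c + 1)
  have hr : 0 < r := sqrt_pos.2 (neg_lt_iff_pos_add.1 hc1)
  have hrC : (r : ℂ) ≠ 0 := Complex.ofReal_ne_zero.2 hr.ne'
  have hr2 : (r : ℂ) ^ 2 = c + 1 := by exact_mod_cast sq_sqrt (neg_lt_iff_pos_add.1 hc1).le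
  obtain ⟨ν, -, hν, -, -, hF⟩ := (hBN _ inferInstance hmean hvar).1 hFID
  refine ⟨ν, hν, (eq_of_cauchyTransform_eq fun z hz => ?_).symm⟩
  have hzr : 0 < (z * r).im := by simpa using mul_pos hz hr
  have hG : cauchyTransform (conv ν S) z = z - recipCauchy (dilate r⁻¹ μc) z := by
    rw [hF z hz, sub_sub_cancel]
  rw [hG, recipCauchy_dilate _ (inv_ne_zero hr.ne'), cauchyTransform_dilate _ (inv_ne_zero hr.ne')]
  push_cast
  rw [div_inv_eq_mul, hCF _ hzr, ← hr2]
  field_simp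

/-- For `c ∈ (−1, 0]`, the Askey–Wimp–Kerov distribution `μ_{c+1}`, dilated by
`1/√(c+1)`, decomposes as a free additive convolution `ν_c ⊞ S` of the standard
semicircle law `S` with some probability measure `ν_c`.  Here `conv` is free additive
convolution, `S` the centered semicircle law of variance one, the relation
`G_{μ_{c+1}}(z) = (z − F_{μ_c}(z))/(c+1)` is the continued-fraction identity, the
variance-one dilation `μ_c¹ = D_{1/√(c+1)} μ_c` is freely infinitely divisible, and the
Belinschi–Nica characterization of free infinite divisibility is assumed. -/
theorem awk_semicircle_decomposition
    (conv : Measure ℝ → Measure ℝ → Measure ℝ) (S : Measure ℝ)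
    (hS : IsProbabilityMeasure S)
    (c : ℝ) (hc1 : -1 < c) (hc2 : c ≤ 0)
    (μc μc1 : Measure ℝ) (hμc : IsProbabilityMeasure μc)
    (hμc1 : IsProbabilityMeasure μc1)
    -- the continued fraction relation between `μ_c` and `μ_{c+1}`:
    (hCF : ∀ z : ℂ, 0 < z.im →
      cauchyTransform μc1 z = (z - recipCauchy μc z) / ((c : ℂ) + 1))
    -- the variance-one dilation of `μ_c` has mean zero and variance one:
    (hmean : ∫ x : ℝ, x ∂(dilate (Real.sqrt (c + 1))⁻¹ μc) = 0)
    (hvar : ∫ x : ℝ, x ^ 2 ∂(dilate (Real.sqrt (c + 1))⁻¹ μc) = 1)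
    -- free infinite divisibility of the dilation of `μ_c` (given):
    (hFID : FreelyInfDivisible conv (dilate (Real.sqrt (c + 1))⁻¹ μc))
    -- Belinschi–Nica characterization (given):
    (hBN : ∀ lam : Measure ℝ, IsProbabilityMeasure lam →
      (∫ x : ℝ, x ∂lam) = 0 → (∫ x : ℝ, x ^ 2 ∂lam) = 1 →
      (FreelyInfDivisible conv lam ↔
        ∃ ν ρ : Measure ℝ, IsProbabilityMeasure ν ∧ IsProbabilityMeasure ρ ∧
          (∀ z : ℂ, 0 < z.im → recipCauchy ρ z = z - cauchyTransform ν z) ∧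
          (∀ z : ℂ, 0 < z.im →
            recipCauchy lam z = z - cauchyTransform (conv ν S) z))) :
    ∃ ν : Measure ℝ, IsProbabilityMeasure ν ∧
      dilate (Real.sqrt (c + 1))⁻¹ μc1 = conv ν S :=
  awk_semicircle_decomposition_general conv S c hc1 μc μc1 hμc hμc1 hCF hmean hvar hFID hBN
end
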